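/- arXiv:2507.02839 — 8 statements merged into one kernel-verified Lean document; each statement's English description precedes it below -/
import Mathlib

section
/- Let k ≤ n be positive integers and let G be a simple graph on vertex set {1,…,k}. Then the supremum of Σ_{i=1}^k x_{ii} over all X ∈ V(k,n) satisfying x_{ij} = 0 for all i ≠ j and x_{ii} + x_{jj} ≤ 0 for every edge {i,j} of G equals 2·α(G) − k, and this supremum is attained. -/
open Matrix

/-! The orthonormality constraint forces every diagonal entry to be `±1`, so the objective is
`2 |S| - k` with `S` the set of `+1` entries; the edge constraints say exactly that `S` is stable.
Conversely, the signs `+1` on a maximum stable set and `-1` elsewhere give a feasible matrix. -/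

/-- The stability (independence) number of a simple graph on `Fin m`. -/
noncomputable def stabNum {m : ℕ} (G : SimpleGraph (Fin m)) : ℕ :=
  sSup {r | ∃ s : Finset (Fin m), (∀ i ∈ s, ∀ j ∈ s, ¬ G.Adj i j) ∧ s.card = r}

section StabNum

variable {m : ℕ} (G : SimpleGraph (Fin m))

lemma stabNum_bddAbove :
    BddAbove {r | ∃ s : Finset (Fin m), (∀ i ∈ s, ∀ j ∈ s, ¬ G.Adj i j) ∧ s.card = r} :=
  ⟨m, fun _ ⟨s, _, hs⟩ => hs ▸ by simpa using s.card_le_univ⟩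

lemma exists_stable_card_eq_stabNum :
    ∃ s : Finset (Fin m), (∀ i ∈ s, ∀ j ∈ s, ¬ G.Adj i j) ∧ s.card = stabNum G :=
  Nat.sSup_mem (s := {r | ∃ s : Finset (Fin m), _ ∧ s.card = r}) ⟨0, ∅, by simp⟩
    (stabNum_bddAbove G)

lemma card_le_stabNum {s : Finset (Fin m)} (hs : ∀ i ∈ s, ∀ j ∈ s, ¬ G.Adj i j) :
    s.card ≤ stabNum G :=
  le_csSup (stabNum_bddAbove G) ⟨s, hs, rfl⟩

end StabNum

lemma sum_ite_mem_one_neg_one {ι : Type*} [Fintype ι] [DecidableEq ι] (s : Finset ι) :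
    ∑ i, (if i ∈ s then 1 else -1 : ℝ) = 2 * s.card - Fintype.card ι := by
  have h : ∀ i, (if i ∈ s then 1 else -1 : ℝ) = 2 * (if i ∈ s then 1 else 0) - 1 := fun i => by
    split_ifs <;> norm_num
  simp only [h, Finset.sum_sub_distrib, ← Finset.mul_sum, Finset.sum_boole]
  simp

lemma sum_eq_two_mul_card_sub_of_eq_one_or_neg_one {ι : Type*} [Fintype ι] [DecidableEq ι]
    {v : ι → ℝ} (hv : ∀ i, v i = 1 ∨ v i = -1) :
    ∑ i, v i = 2 * (Finset.univ.filter (v · = 1)).card - Fintype.card ι := by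
  rw [← sum_ite_mem_one_neg_one]
  refine Finset.sum_congr rfl fun i _ => ?_
  rcases hv i with h | h <;> simp [h]

lemma eq_one_or_eq_neg_one_of_transpose_mul_self_eq_one {m k : Type*} [Fintype m]
    [DecidableEq k] {X : Matrix m k ℝ} (hX : Xᵀ * X = 1) {r : m} {j : k}
    (h : ∀ i, i ≠ r → X i j = 0) : X r j = 1 ∨ X r j = -1 := by
  have hjj := congr_fun₂ hX j j
  rw [mul_apply, Fintype.sum_eq_single r fun i hi => by simp [h i hi], one_apply_eq] at hjj
  exact mul_self_eq_one_iff.mp hjj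

def diagEmbed {k : ℕ} (n : ℕ) (σ : Fin k → ℝ) : Matrix (Fin n) (Fin k) ℝ :=
  of fun i j => if (i : ℕ) = j then σ j else 0

lemma diagEmbed_castLE {k n : ℕ} (hkn : k ≤ n) (σ : Fin k → ℝ) (j : Fin k) :
    diagEmbed n σ (Fin.castLE hkn j) j = σ j := by
  simp [diagEmbed]

lemma transpose_mul_diagEmbed {k n : ℕ} (hkn : k ≤ n) (σ : Fin k → ℝ) :
    (diagEmbed n σ)ᵀ * diagEmbed n σ = diagonal fun j => σ j * σ j := by
  ext j j'
  rw [mul_apply, Fintype.sum_eq_single (Fin.castLE hkn j)]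
  · by_cases h : j = j'
    · subst h; simp [diagEmbed]
    · simp [diagEmbed, h, Fin.val_ne_of_ne h]
  · intro i hi
    have : (i : ℕ) ≠ j := fun h => hi (Fin.ext h)
    simp [diagEmbed, this]

theorem stmt0_general (k n : ℕ) (hkn : k ≤ n) (G : SimpleGraph (Fin k)) :
    IsGreatest {y : ℝ | ∃ X : Matrix (Fin n) (Fin k) ℝ,
        Xᵀ * X = 1 ∧
        (∀ (i : Fin n) (j : Fin k), (i : ℕ) ≠ (j : ℕ) → X i j = 0) ∧
        (∀ i j : Fin k, G.Adj i j →
          X (Fin.castLE hkn i) i + X (Fin.castLE hkn j) j ≤ 0) ∧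
        y = ∑ i : Fin k, X (Fin.castLE hkn i) i}
      (2 * (stabNum G : ℝ) - k) := by
  classical
  constructor
  · obtain ⟨s, hs, hcard⟩ := exists_stable_card_eq_stabNum G
    let σ : Fin k → ℝ := fun j => if j ∈ s then 1 else -1
    refine ⟨diagEmbed n σ, ?_, fun i j h => by simp [diagEmbed, h], fun i j hadj => ?_, ?_⟩
    · rw [transpose_mul_diagEmbed hkn, ← diagonal_one]
      congr 1; ext j; by_cases h : j ∈ s <;> simp [σ, h]
    · simp only [diagEmbed_castLE, σ]
      split_ifs with hi hj
      · exact absurd hadj (hs i hi j hj)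
      all_goals norm_num
    · simp only [diagEmbed_castLE, σ, sum_ite_mem_one_neg_one, hcard, Fintype.card_fin]
  · rintro y ⟨X, hX, hsupp, hedge, rfl⟩
    have hsign (i : Fin k) : X (Fin.castLE hkn i) i = 1 ∨ X (Fin.castLE hkn i) i = -1 :=
      eq_one_or_eq_neg_one_of_transpose_mul_self_eq_one hX fun r hr =>
        hsupp r i fun h => hr (Fin.ext h)
    have hstable : ∀ i ∈ Finset.univ.filter (fun i => X (Fin.castLE hkn i) i = 1),
        ∀ j ∈ Finset.univ.filter (fun i => X (Fin.castLE hkn i) i = 1), ¬ G.Adj i j := by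
      intro i hi j hj hadj
      linarith [hedge i j hadj, (Finset.mem_filter.mp hi).2, (Finset.mem_filter.mp hj).2]
    rw [sum_eq_two_mul_card_sub_of_eq_one_or_neg_one hsign, Fintype.card_fin]
    gcongr
    exact_mod_cast card_le_stabNum G hstable

/-- The supremum of `∑ x_{ii}` over `X ∈ V(k,n)` with zero off-diagonal entries and
`x_{ii} + x_{jj} ≤ 0` on edges equals `2 α(G) − k`, and it is attained. -/
theorem stmt0 (k n : ℕ) (hk : 0 < k) (hkn : k ≤ n) (G : SimpleGraph (Fin k)) :
    IsGreatest {y : ℝ | ∃ X : Matrix (Fin n) (Fin k) ℝ,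
        Xᵀ * X = 1 ∧
        (∀ (i : Fin n) (j : Fin k), (i : ℕ) ≠ (j : ℕ) → X i j = 0) ∧
        (∀ i j : Fin k, G.Adj i j →
          X (Fin.castLE hkn i) i + X (Fin.castLE hkn j) j ≤ 0) ∧
        y = ∑ i : Fin k, X (Fin.castLE hkn i) i}
      (2 * (stabNum G : ℝ) - k) :=
  stmt0_general k n hkn G
end

section
/- Let r ≤ k ≤ n be positive integers and let G be a simple graph on vertex set {1,…,k}. Then α(G) ≥ r if and only if there exists X ∈ V(k,n) with x_{ij} = 0 for all i ≠ j, with x_{ii} + x_{jj} ≤ 0 for every edge {i,j} of G, and with Σ_{i=1}^k x_{ii} ≥ 2r − k. -/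
/-!
A matrix `X ∈ V(k,n)` whose only possibly nonzero entries are `x_{ii}` has `XᵀX` diagonal with
entries `x_{ii}²`, so every `x_{ii}` is `±1`. Such an `X` is thus the same as a set `S` of
vertices, those with `x_{ii} = 1`; then `∑ x_{ii} = 2|S| - k`, and the edge condition
`x_{ii} + x_{jj} ≤ 0` says exactly that no edge has both ends in `S`.
-/

open Matrix

open Finset

theorem le_stabNum_iff {m r : ℕ} (G : SimpleGraph (Fin m)) :
    r ≤ stabNum G ↔ ∃ s : Finset (Fin m), (∀ i ∈ s, ∀ j ∈ s, ¬ G.Adj i j) ∧ r ≤ s.card := by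
  let S : Set ℕ := {r | ∃ s : Finset (Fin m), (∀ i ∈ s, ∀ j ∈ s, ¬ G.Adj i j) ∧ s.card = r}
  have hbdd : BddAbove S := by
    refine ⟨m, ?_⟩
    rintro _ ⟨s, -, rfl⟩
    simpa using card_le_univ s
  have hne : S.Nonempty := ⟨0, ∅, by simp⟩
  show r ≤ sSup S ↔ _
  constructor
  · intro hr
    obtain ⟨s, hs, hcard⟩ := Nat.sSup_mem hne hbdd
    exact ⟨s, hs, hcard ▸ hr⟩
  · rintro ⟨s, hs, hr⟩
    exact hr.trans (le_csSup hbdd ⟨s, hs, rfl⟩)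

section SignVector

variable {ι : Type*} [DecidableEq ι]

def signVec (s : Finset ι) (i : ι) : ℝ :=
  if i ∈ s then 1 else -1

theorem signVec_mul_self (s : Finset ι) (i : ι) : signVec s i * signVec s i = 1 := by
  unfold signVec; split_ifs <;> norm_num

theorem sum_signVec [Fintype ι] (s : Finset ι) : ∑ i, signVec s i = 2 * #s - Fintype.card ι := by
  have h : ∀ i, signVec s i = 2 * (if i ∈ s then 1 else 0) - 1 := by
    intro i; unfold signVec; split_ifs <;> norm_num
  simp only [h, sum_sub_distrib, ← mul_sum, sum_ite_mem, univ_inter, sum_const, card_univ]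
  simp

theorem signVec_add_signVec_nonpos {s : Finset ι} {i j : ι} (h : ¬(i ∈ s ∧ j ∈ s)) :
    signVec s i + signVec s j ≤ 0 := by
  unfold signVec; split_ifs <;> simp_all

theorem eq_signVec_of_forall [Fintype ι] {d : ι → ℝ} (hd : ∀ i, d i = 1 ∨ d i = -1) :
    d = signVec {i | d i = 1} := by
  ext i
  rcases hd i with h | h <;> simp [signVec, h]

end SignVector

section RectDiagonal

variable {R : Type*} {k n : ℕ}

def rectDiagonal [Zero R] (d : Fin k → R) : Matrix (Fin n) (Fin k) R :=
  fun i j => if (i : ℕ) = j then d j else 0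

theorem rectDiagonal_apply_of_val_ne [Zero R] (d : Fin k → R) (i : Fin n) (j : Fin k)
    (h : (i : ℕ) ≠ (j : ℕ)) : rectDiagonal d i j = 0 :=
  if_neg h

theorem rectDiagonal_castLE [Zero R] (hkn : k ≤ n) (d : Fin k → R) (j : Fin k) :
    rectDiagonal d (Fin.castLE hkn j) j = d j :=
  if_pos rfl

theorem transpose_mul_self_eq_diagonal [NonUnitalNonAssocSemiring R] (hkn : k ≤ n)
    (X : Matrix (Fin n) (Fin k) R)
    (hX : ∀ (i : Fin n) (j : Fin k), (i : ℕ) ≠ (j : ℕ) → X i j = 0) :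
    Xᵀ * X = diagonal fun j => X (Fin.castLE hkn j) j * X (Fin.castLE hkn j) j := by
  ext a b
  rw [mul_apply, sum_eq_single (Fin.castLE hkn a)]
  · by_cases hab : a = b
    · simp [hab]
    · rw [diagonal_apply_ne _ hab, hX _ b (by simpa [Fin.val_inj] using hab), mul_zero]
  · intro i _ hi
    rw [transpose_apply, hX i a (fun h => hi (Fin.ext (by simpa using h))), zero_mul]
  · simp

end RectDiagonal

theorem stmt1_general (r k n : ℕ) (hkn : k ≤ n)
    (G : SimpleGraph (Fin k)) :
    r ≤ stabNum G ↔
      ∃ X : Matrix (Fin n) (Fin k) ℝ,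
        Xᵀ * X = 1 ∧
        (∀ (i : Fin n) (j : Fin k), (i : ℕ) ≠ (j : ℕ) → X i j = 0) ∧
        (∀ i j : Fin k, G.Adj i j →
          X (Fin.castLE hkn i) i + X (Fin.castLE hkn j) j ≤ 0) ∧
        2 * (r : ℝ) - k ≤ ∑ i : Fin k, X (Fin.castLE hkn i) i := by
  rw [le_stabNum_iff]
  constructor
  · rintro ⟨s, hs, hr⟩
    have hX := rectDiagonal_apply_of_val_ne (n := n) (signVec s)
    refine ⟨rectDiagonal (signVec s), ?_, hX, fun i j hij => ?_, ?_⟩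
    · simp only [transpose_mul_self_eq_diagonal hkn _ hX, rectDiagonal_castLE, signVec_mul_self,
        diagonal_one]
    · simp only [rectDiagonal_castLE]
      exact signVec_add_signVec_nonpos fun h => hs i h.1 j h.2 hij
    · simp only [rectDiagonal_castLE, sum_signVec, Fintype.card_fin]
      gcongr
  · rintro ⟨X, horth, hX, hedge, hsum⟩
    set d : Fin k → ℝ := fun j => X (Fin.castLE hkn j) j
    have hd : ∀ j, d j = 1 ∨ d j = -1 := by
      rw [transpose_mul_self_eq_diagonal hkn X hX, ← diagonal_one,
        diagonal_eq_diagonal_iff] at horth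
      exact fun j => mul_self_eq_one_iff.mp (horth j)
    set S : Finset (Fin k) := {i | d i = 1}
    refine ⟨S, fun i hi j hj hij => ?_, ?_⟩
    · have hdij := hedge i j hij
      simp only [S, d, mem_filter, mem_univ, true_and] at hi hj
      linarith
    · rw [eq_signVec_of_forall hd, sum_signVec, Fintype.card_fin] at hsum
      have : (r : ℝ) ≤ #S := by linarith
      exact_mod_cast this

/-- `α(G) ≥ r` iff there is `X ∈ V(k,n)` with zero off-diagonal entries,
`x_{ii} + x_{jj} ≤ 0` on edges, and `∑ x_{ii} ≥ 2r − k`. -/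
theorem stmt1 (r k n : ℕ) (hr : 0 < r) (hrk : r ≤ k) (hkn : k ≤ n)
    (G : SimpleGraph (Fin k)) :
    r ≤ stabNum G ↔
      ∃ X : Matrix (Fin n) (Fin k) ℝ,
        Xᵀ * X = 1 ∧
        (∀ (i : Fin n) (j : Fin k), (i : ℕ) ≠ (j : ℕ) → X i j = 0) ∧
        (∀ i j : Fin k, G.Adj i j →
          X (Fin.castLE hkn i) i + X (Fin.castLE hkn j) j ≤ 0) ∧
        2 * (r : ℝ) - k ≤ ∑ i : Fin k, X (Fin.castLE hkn i) i :=
  stmt1_general r k n hkn G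
end

section
/- Let 0 = k_0 < k_1 < … < k_p < k_{p+1} = n be integers, set n_j = k_j − k_{j−1} for j = 1,…,p+1, and let a_1 > a_2 > … > a_p > a_{p+1} = 0 be reals with a_1 < 2a_p. Let G be a simple graph on vertex set {1,…,n}. Then α(G) ≥ k_p if and only if there exists X ∈ Flag(k_1,…,k_p,n) with x_{ij} = 0 for all i ≠ j and x_{ii} + x_{jj} ≤ a_1 for every edge {i,j} of G. -/
open Matrix Finset

theorem stabNum_eq_indepNum {m : ℕ} (G : SimpleGraph (Fin m)) : stabNum G = G.indepNum := by
  apply le_antisymm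
  · refine csSup_le ⟨0, ∅, by simp, rfl⟩ ?_
    rintro r ⟨s, hs, rfl⟩
    exact SimpleGraph.IsIndepSet.card_le_indepNum fun i hi j hj _ ↦ hs i hi j hj
  · obtain ⟨s, hs⟩ := G.exists_isNIndepSet_indepNum
    refine le_csSup ⟨m, ?_⟩ ⟨s, fun i hi j hj hij ↦ hs.isIndepSet hi hj hij.ne hij, hs.card_eq⟩
    rintro r ⟨t, -, rfl⟩
    simpa using card_le_univ t

section Conjugation

variable {n R : Type*} [Fintype n] [DecidableEq n] [CommRing R]

theorem exists_orthogonal_diagonal_comp_perm_eq_conj (c : n → R) (σ : Equiv.Perm n) :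
    ∃ Q : Matrix n n R, Qᵀ * Q = 1 ∧ diagonal (c ∘ σ) = Q * diagonal c * Qᵀ := by
  refine ⟨σ.permMatrix R, ?_, ?_⟩
  · rw [transpose_permMatrix, ← permMatrix_mul, mul_inv_cancel, permMatrix_one]
  · rw [transpose_permMatrix, PEquiv.toMatrix_toPEquiv_mul, PEquiv.mul_toMatrix_toPEquiv,
      submatrix_submatrix, Function.comp_id, Function.id_comp, Equiv.Perm.inv_def,
      Equiv.symm_symm, submatrix_diagonal_equiv]

theorem map_univ_eq_of_diagonal_eq_orthogonal_conj [IsDomain R] {c d : n → R}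
    {Q : Matrix n n R} (hQ : Qᵀ * Q = 1) (h : diagonal d = Q * diagonal c * Qᵀ) :
    univ.val.map d = univ.val.map c := by
  have hchar : (diagonal d).charpoly = (diagonal c).charpoly := by
    rw [h, charpoly_mul_comm, ← mul_assoc, hQ, one_mul]
  have hroots (e : n → R) : (diagonal e).charpoly.roots = univ.val.map e := by
    rw [charpoly_diagonal, prod_eq_multiset_prod]
    simpa [Multiset.map_map] using Polynomial.roots_multiset_prod_X_sub_C (univ.val.map e)
  rw [← hroots, ← hroots, hchar]

end Conjugation

theorem card_filter_comp_eq_of_map_univ_eq {α β : Type*} [Fintype α] {c d : α → β}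
    (h : univ.val.map d = univ.val.map c) (P : β → Prop) [DecidablePred P] :
    #{i | P (d i)} = #{i | P (c i)} := by
  have h' := congrArg (Multiset.countP P) h
  rwa [Multiset.countP_map, Multiset.countP_map] at h'

namespace SimpleGraph

variable {V : Type*} [Fintype V] (G : SimpleGraph V) {c d : V → ℝ} {M : ℝ}

theorem exists_perm_forall_adj_add_le [DecidableEq V] (hc : ∀ i, c i ≤ M)
    (h : #{i | c i ≠ 0} ≤ G.indepNum) :
    ∃ σ : Equiv.Perm V, ∀ i j, G.Adj i j → c (σ i) + c (σ j) ≤ M := by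
  obtain ⟨s, hs⟩ := G.exists_isNIndepSet_indepNum
  obtain ⟨t, hts, ht⟩ := exists_subset_card_eq (hs.card_eq ▸ h)
  let e : {x // x ∈ t} ≃ {x // c x ≠ 0} :=
    Fintype.equivOfCardEq (by rw [Fintype.card_coe, Fintype.card_subtype, ht])
  have hzero (x : V) (hx : x ∉ t) : c (e.extendSubtype x) = 0 :=
    not_not.mp (e.extendSubtype_not_mem x hx)
  refine ⟨e.extendSubtype, fun i j hij ↦ ?_⟩
  by_cases hi : i ∈ t
  · have hj : j ∉ t := fun hj ↦ hs.isIndepSet (hts hi) (hts hj) hij.ne hij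
    simpa [hzero j hj] using hc _
  · simpa [hzero i hi] using hc _

theorem card_ne_zero_le_indepNum_of_map_univ_eq (hc : ∀ i, c i ≠ 0 → M < 2 * c i)
    (hdc : univ.val.map d = univ.val.map c) (hd : ∀ i j, G.Adj i j → d i + d j ≤ M) :
    #{i | c i ≠ 0} ≤ G.indepNum := by
  have hd' (i : V) (hi : d i ≠ 0) : M < 2 * d i := by
    obtain ⟨m, -, hm⟩ := Multiset.mem_map.mp (hdc ▸ Multiset.mem_map_of_mem d (mem_univ i))
    exact hm ▸ hc m (hm ▸ hi)
  rw [← card_filter_comp_eq_of_map_univ_eq hdc (· ≠ 0)]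
  refine IsIndepSet.card_le_indepNum fun i hi j hj _ hij ↦ ?_
  linarith [hd i j hij, hd' i (mem_filter.mp hi).2, hd' j (mem_filter.mp hj).2]

end SimpleGraph

theorem exists_castSucc_le_and_lt_succ {α : Type*} [LinearOrder α] {m : ℕ} (k : Fin (m + 1) → α)
    {x : α} (h0 : k 0 ≤ x) (hx : x < k (Fin.last m)) :
    ∃ j : Fin m, k j.castSucc ≤ x ∧ x < k j.succ := by
  induction m with
  | zero => exact absurd h0 (not_le.mpr hx)
  | succ m ih =>
    by_cases h : x < k (Fin.last m).castSucc
    · obtain ⟨j, hj⟩ := ih (k ∘ Fin.castSucc) h0 h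
      exact ⟨j.castSucc, hj.1, by rw [Fin.succ_castSucc]; exact hj.2⟩
    · exact ⟨Fin.last m, not_lt.mp h, by rwa [Fin.succ_last]⟩

def IsStepVector {α : Type*} {p n : ℕ} (k : Fin (p + 2) → ℕ) (a : Fin (p + 1) → α)
    (c : Fin n → α) : Prop :=
  ∀ (j : Fin (p + 1)) (i : Fin n), k j.castSucc ≤ (i : ℕ) → (i : ℕ) < k j.succ → c i = a j

namespace IsStepVector

variable {p n : ℕ} {k : Fin (p + 2) → ℕ}

theorem eq_last {α : Type*} {a : Fin (p + 1) → α} {c : Fin n → α} (hc : IsStepVector k a c)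
    (hkn : k (Fin.last (p + 1)) = n) {i : Fin n} (hi : k (Fin.last p).castSucc ≤ i) :
    c i = a (Fin.last p) :=
  hc _ i hi (by rw [Fin.succ_last, hkn]; exact i.isLt)

theorem exists_eq_castSucc {α : Type*} {a : Fin (p + 1) → α} {c : Fin n → α}
    (hc : IsStepVector k a c) (hk0 : k 0 = 0) {i : Fin n} (hi : i < k (Fin.last p).castSucc) :
    ∃ j : Fin p, c i = a j.castSucc := by
  obtain ⟨j, hj₁, hj₂⟩ := exists_castSucc_le_and_lt_succ (k ∘ Fin.castSucc) (x := (i : ℕ))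
    (by simp [hk0]) hi
  exact ⟨j, hc _ i hj₁ (by rwa [Fin.succ_castSucc])⟩

variable {a : Fin (p + 1) → ℝ} {c : Fin n → ℝ}

theorem le_apply_zero (hc : IsStepVector k a c) (hk0 : k 0 = 0)
    (hkn : k (Fin.last (p + 1)) = n) (ha : Antitone a) (i : Fin n) : c i ≤ a 0 := by
  by_cases hi : i < k (Fin.last p).castSucc
  · obtain ⟨j, hj⟩ := hc.exists_eq_castSucc hk0 hi
    exact hj ▸ ha (Fin.zero_le _)
  · exact hc.eq_last hkn (not_lt.mp hi) ▸ ha (Fin.zero_le _)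

theorem ne_zero_iff (hc : IsStepVector k a c) (hk0 : k 0 = 0) (hkn : k (Fin.last (p + 1)) = n)
    (ha : StrictAnti a) (halast : a (Fin.last p) = 0) {i : Fin n} :
    c i ≠ 0 ↔ i < k (Fin.last p).castSucc := by
  refine ⟨fun h ↦ not_le.mp fun hi ↦ h (halast ▸ hc.eq_last hkn hi), fun hi ↦ ?_⟩
  obtain ⟨j, hj⟩ := hc.exists_eq_castSucc hk0 hi
  exact hj ▸ halast ▸ (ha (Fin.castSucc_lt_last j)).ne'

theorem card_ne_zero (hc : IsStepVector k a c) (hk0 : k 0 = 0) (hkn : k (Fin.last (p + 1)) = n)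
    (hk : Monotone k) (ha : StrictAnti a) (halast : a (Fin.last p) = 0) :
    #{i | c i ≠ 0} = k (Fin.last p).castSucc := by
  simp_rw [hc.ne_zero_iff hk0 hkn ha halast]
  rw [Fin.card_filter_val_lt, min_eq_right]
  exact hkn ▸ hk (Fin.le_last _)

theorem lt_two_mul (hc : IsStepVector k a c) (hk0 : k 0 = 0) (hkn : k (Fin.last (p + 1)) = n)
    (ha : StrictAnti a) (halast : a (Fin.last p) = 0)
    (ha2 : a 0 < 2 * a ⟨p - 1, Nat.sub_lt_succ p 1⟩) {i : Fin n} (hi : c i ≠ 0) :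
    a 0 < 2 * c i := by
  obtain ⟨j, hj⟩ := hc.exists_eq_castSucc hk0 ((hc.ne_zero_iff hk0 hkn ha halast).mp hi)
  have : a ⟨p - 1, Nat.sub_lt_succ p 1⟩ ≤ c i :=
    hj ▸ ha.antitone (Fin.le_def.mpr (Nat.le_sub_one_of_lt j.isLt))
  linarith

end IsStepVector

/-- LP feasibility over the flag manifold detects the stability number:
with `0 = k₀ < k₁ < ⋯ < k_p < k_{p+1} = n`, parameters
`a₁ > ⋯ > a_p > a_{p+1} = 0` with `a₁ < 2 a_p`, and `c` the step vector whose `i`-th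
entry is `a_j` for `k_{j-1} ≤ i < k_j`, one has `α(G) ≥ k_p` iff there is
`X = Q diag(c) Qᵀ ∈ Flag(k₁,…,k_p,n)` with zero off-diagonal entries and
`x_{ii} + x_{jj} ≤ a₁` on every edge. -/
theorem stmt6 (p n : ℕ)
    (k : Fin (p + 2) → ℕ) (hk0 : k 0 = 0) (hkn : k (Fin.last (p + 1)) = n)
    (hkmono : StrictMono k)
    (a : Fin (p + 1) → ℝ) (ha : StrictAnti a) (halast : a (Fin.last p) = 0)
    (ha2 : a 0 < 2 * a ⟨p - 1, by omega⟩)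
    (c : Fin n → ℝ)
    (hc : ∀ (j : Fin (p + 1)) (i : Fin n),
      k j.castSucc ≤ (i : ℕ) → (i : ℕ) < k j.succ → c i = a j)
    (G : SimpleGraph (Fin n)) :
    k ⟨p, by omega⟩ ≤ stabNum G ↔
      ∃ X : Matrix (Fin n) (Fin n) ℝ,
        (∃ Q : Matrix (Fin n) (Fin n) ℝ, Qᵀ * Q = 1 ∧
          X = Q * Matrix.diagonal c * Qᵀ) ∧
        (∀ i j : Fin n, i ≠ j → X i j = 0) ∧
        (∀ i j : Fin n, G.Adj i j → X i i + X j j ≤ a 0) := by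
  have hstep : IsStepVector k a c := hc
  rw [stabNum_eq_indepNum, show k ⟨p, _⟩ = k (Fin.last p).castSucc from rfl,
    ← hstep.card_ne_zero hk0 hkn hkmono.monotone ha halast]
  constructor
  · intro h
    obtain ⟨σ, hσ⟩ := G.exists_perm_forall_adj_add_le (hstep.le_apply_zero hk0 hkn ha.antitone) h
    obtain ⟨Q, hQ, hQc⟩ := exists_orthogonal_diagonal_comp_perm_eq_conj c σ
    refine ⟨diagonal (c ∘ σ), ⟨Q, hQ, hQc⟩, fun i j hij ↦ diagonal_apply_ne _ hij,
      fun i j hij ↦ ?_⟩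
    simpa using hσ i j hij
  · rintro ⟨X, ⟨Q, hQ, hXQ⟩, hoff, hadj⟩
    have hdiag : diagonal X.diag = Q * diagonal c * Qᵀ :=
      (show X.IsDiag from hoff).diagonal_diag.trans hXQ
    exact G.card_ne_zero_le_indepNum_of_map_univ_eq
      (fun _ ↦ hstep.lt_two_mul hk0 hkn ha halast ha2)
      (map_univ_eq_of_diagonal_eq_orthogonal_conj hQ hdiag) hadj
end

section
/- Let k ≤ n be positive integers, let G be a simple graph on vertex set {1,…,k} with adjacency matrix A ∈ ℝ^{k×k} and edge count |E|. Then the maximum of diag(X)ᵀ (I_k − A) diag(X) over all X ∈ V(k,n) equals 4κ(G) − 2|E| + k. -/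
open Matrix

/-- The size of the cut determined by a vertex subset `S`: the number of edges with one
endpoint in `S` and the other outside `S` (counted once per undirected edge). -/
def cutSize {k : ℕ} (G : SimpleGraph (Fin k)) [DecidableRel G.Adj]
    (S : Finset (Fin k)) : ℕ :=
  (Finset.univ.filter (fun p : Fin k × Fin k => G.Adj p.1 p.2 ∧ p.1 ∈ S ∧ p.2 ∉ S)).card

/-- The max-cut of a simple graph on `Fin k`. -/
noncomputable def maxCut {k : ℕ} (G : SimpleGraph (Fin k)) [DecidableRel G.Adj] : ℕ :=
  sSup {r | ∃ S : Finset (Fin k), cutSize G S = r}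

/-! The diagonal `d` of a matrix with orthonormal columns lies in the cube `[-1, 1]^k`, and
conversely every sign vector is the diagonal of such a matrix (`k ≤ n`). Since `1 - A` has unit
diagonal, `d ⬝ᵥ (1 - A) *ᵥ d` is a convex quadratic in each coordinate separately, so its maximum
over the cube is attained at a sign vector. For the sign vector `ε` of a vertex set `S`,
`(1 + ε) ⬝ᵥ A *ᵥ (1 - ε)` counts each cut edge four times, which turns the value at `ε` into
`4 cut(S) - 2|E| + k`. -/

open Finset Function

section QuadraticForm

variable {ι : Type*} [DecidableEq ι]

def signVector (S : Finset ι) : ι → ℝ := fun i => if i ∈ S then 1 else -1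

lemma signVector_sq (S : Finset ι) (i : ι) : signVector S i ^ 2 = 1 := by
  unfold signVector; split_ifs <;> norm_num

lemma update_eq_update_zero_add_smul_single (d : ι → ℝ) (a : ι) (t : ℝ) :
    update d a t = update d a 0 + t • Pi.single a 1 := by
  ext i
  rcases eq_or_ne i a with rfl | h <;> simp [*]

variable [Fintype ι]

lemma exists_dotProduct_mulVec_update_eq (M : Matrix ι ι ℝ) (d : ι → ℝ) (a : ι) :
    ∃ b c : ℝ, ∀ t, update d a t ⬝ᵥ M *ᵥ update d a t = M a a * t ^ 2 + b * t + c := by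
  have hee : Pi.single a 1 ⬝ᵥ M *ᵥ Pi.single a 1 = M a a := by simp
  refine ⟨Pi.single a 1 ⬝ᵥ M *ᵥ update d a 0 + update d a 0 ⬝ᵥ M *ᵥ Pi.single a 1,
    update d a 0 ⬝ᵥ M *ᵥ update d a 0, fun t => ?_⟩
  rw [update_eq_update_zero_add_smul_single]
  simp only [mulVec_add, mulVec_smul, dotProduct_add, add_dotProduct, dotProduct_smul,
    smul_dotProduct, hee, smul_eq_mul]
  ring

lemma dotProduct_mulVec_update_le_max (M : Matrix ι ι ℝ) (d : ι → ℝ) (a : ι)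
    (ha : 0 ≤ M a a) {t : ℝ} (ht : t ^ 2 ≤ 1) :
    update d a t ⬝ᵥ M *ᵥ update d a t ≤
      max (update d a 1 ⬝ᵥ M *ᵥ update d a 1) (update d a (-1) ⬝ᵥ M *ᵥ update d a (-1)) := by
  obtain ⟨b, c, hq⟩ := exists_dotProduct_mulVec_update_eq M d a
  rw [hq, hq, hq]
  have : |t| ≤ 1 := sq_le_one_iff_abs_le_one t |>.mp ht
  rcases le_total 0 b with hb | hb
  · exact le_max_of_le_left (by nlinarith [abs_le.mp this])
  · exact le_max_of_le_right (by nlinarith [abs_le.mp this])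

lemma exists_signVector_dotProduct_mulVec_ge (M : Matrix ι ι ℝ) (hM : ∀ i, 0 ≤ M i i)
    (d : ι → ℝ) (hd : ∀ i, d i ^ 2 ≤ 1) :
    ∃ S : Finset ι, d ⬝ᵥ M *ᵥ d ≤ signVector S ⬝ᵥ M *ᵥ signVector S := by
  suffices ∀ T : Finset ι, ∀ d : ι → ℝ, (∀ i, d i ^ 2 ≤ 1) → (∀ i ∉ T, d i = 1 ∨ d i = -1) →
      ∃ S : Finset ι, d ⬝ᵥ M *ᵥ d ≤ signVector S ⬝ᵥ M *ᵥ signVector S from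
    this univ d hd (by simp)
  intro T
  induction T using Finset.induction_on with
  | empty =>
    intro d _ hsign
    have hd : d = signVector (univ.filter (d · = 1)) := by
      ext i
      rcases hsign i (notMem_empty i) with h | h <;> simp [signVector, h]
    exact ⟨_, le_of_eq (by rw [← hd])⟩
  | insert a T _ ih =>
    intro d hd hsign
    obtain ⟨s, hs, hle⟩ : ∃ s : ℝ, (s = 1 ∨ s = -1) ∧
        d ⬝ᵥ M *ᵥ d ≤ update d a s ⬝ᵥ M *ᵥ update d a s := by
      have := dotProduct_mulVec_update_le_max M d a (hM a) (hd a)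
      rw [update_eq_self] at this
      rcases le_max_iff.mp this with h | h
      exacts [⟨1, .inl rfl, h⟩, ⟨-1, .inr rfl, h⟩]
    obtain ⟨S, hS⟩ := ih (update d a s)
      (fun i => by rcases eq_or_ne i a with rfl | h <;> rcases hs with rfl | rfl <;> simp [*])
      (fun i hi => by rcases eq_or_ne i a with rfl | h <;> simp_all)
    exact ⟨S, hle.trans hS⟩

end QuadraticForm

section Stiefel

variable {m n : Type*} [Fintype m] [DecidableEq n]

lemma sq_le_one_of_transpose_mul_self_eq_one {X : Matrix m n ℝ} (hX : Xᵀ * X = 1)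
    (p : m) (i : n) : X p i ^ 2 ≤ 1 := by
  have hcol : ∑ q, X q i * X q i = 1 := by simpa [mul_apply] using congrFun (congrFun hX i) i
  rw [sq, ← hcol]
  exact single_le_sum (f := fun q => X q i * X q i) (fun q _ => mul_self_nonneg _) (mem_univ p)

lemma exists_transpose_mul_self_eq_one_of_sq_eq_one [DecidableEq m] {f : n → m}
    (hf : Injective f) (ε : n → ℝ) (hε : ∀ i, ε i ^ 2 = 1) :
    ∃ X : Matrix m n ℝ, Xᵀ * X = 1 ∧ ∀ i, X (f i) i = ε i := by
  refine ⟨of fun p i => (Pi.single (f i) (ε i) : m → ℝ) p, ?_, by simp⟩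
  ext i j
  rw [mul_apply]
  simp only [transpose_apply, of_apply]
  change Pi.single (f i) (ε i) ⬝ᵥ Pi.single (f j) (ε j) = _
  rw [single_dotProduct]
  rcases eq_or_ne i j with rfl | h
  · simp [← sq, hε]
  · simp [h, hf.ne h]

end Stiefel

section MaxCut

variable {k : ℕ} (G : SimpleGraph (Fin k)) [DecidableRel G.Adj]

lemma four_mul_cutSize (S : Finset (Fin k)) :
    4 * (cutSize G S : ℝ) = (1 + signVector S) ⬝ᵥ G.adjMatrix ℝ *ᵥ (1 - signVector S) := by
  rw [SimpleGraph.dotProduct_mulVec_adjMatrix, cutSize, natCast_card_filter,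
    Fintype.sum_prod_type, mul_sum]
  refine sum_congr rfl fun i _ => ?_
  rw [mul_sum]
  refine sum_congr rfl fun j _ => ?_
  by_cases hij : G.Adj i j <;> by_cases hi : i ∈ S <;> by_cases hj : j ∈ S <;>
    norm_num [signVector, hij, hi, hj]

lemma signVector_dotProduct_one_sub_adjMatrix_mulVec (S : Finset (Fin k)) :
    signVector S ⬝ᵥ (1 - G.adjMatrix ℝ) *ᵥ signVector S
      = 4 * (cutSize G S : ℝ) - 2 * G.edgeFinset.card + k := by
  have hsymm : signVector S ⬝ᵥ G.adjMatrix ℝ *ᵥ 1 = 1 ⬝ᵥ G.adjMatrix ℝ *ᵥ signVector S := by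
    rw [dotProduct_mulVec, ← mulVec_transpose, SimpleGraph.transpose_adjMatrix, dotProduct_comm]
  have hedges : (1 : Fin k → ℝ) ⬝ᵥ G.adjMatrix ℝ *ᵥ 1 = 2 * G.edgeFinset.card := by
    rw [dotProduct_comm, ← SimpleGraph.natCast_card_dart_eq_dotProduct,
      G.dart_card_eq_twice_card_edges]
    push_cast; rfl
  have hsq : signVector S ⬝ᵥ signVector S = k := by
    simp [dotProduct, ← sq, signVector_sq]
  rw [four_mul_cutSize, sub_mulVec, one_mulVec, dotProduct_sub, hsq]
  simp only [mulVec_sub, add_dotProduct, dotProduct_sub, hsymm, hedges]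
  ring

lemma bddAbove_range_cutSize : BddAbove (Set.range (cutSize G)) :=
  ⟨Fintype.card (Fin k × Fin k), Set.forall_mem_range.mpr fun _ => card_filter_le _ _⟩

lemma cutSize_le_maxCut (S : Finset (Fin k)) : cutSize G S ≤ maxCut G :=
  le_csSup (bddAbove_range_cutSize G) ⟨S, rfl⟩

lemma exists_cutSize_eq_maxCut : ∃ S, cutSize G S = maxCut G :=
  Nat.sSup_mem (Set.range_nonempty _) (bddAbove_range_cutSize G)

end MaxCut

theorem stmt8_general (k n : ℕ) (hkn : k ≤ n)
    (G : SimpleGraph (Fin k)) [DecidableRel G.Adj] :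
    IsGreatest {y : ℝ | ∃ X : Matrix (Fin n) (Fin k) ℝ, Xᵀ * X = 1 ∧
        y = (fun i : Fin k => X (Fin.castLE hkn i) i) ⬝ᵥ
          ((1 - G.adjMatrix ℝ) *ᵥ (fun i : Fin k => X (Fin.castLE hkn i) i))}
      (4 * (maxCut G : ℝ) - 2 * (G.edgeFinset.card : ℝ) + k) := by
  constructor
  · obtain ⟨S, hS⟩ := exists_cutSize_eq_maxCut G
    obtain ⟨X, hX, hdiag⟩ := exists_transpose_mul_self_eq_one_of_sq_eq_one
      (Fin.castLE_injective hkn) (signVector S) (signVector_sq S)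
    refine ⟨X, hX, ?_⟩
    rw [funext hdiag, signVector_dotProduct_one_sub_adjMatrix_mulVec, hS]
  · rintro y ⟨X, hX, rfl⟩
    obtain ⟨S, hS⟩ := exists_signVector_dotProduct_mulVec_ge (1 - G.adjMatrix ℝ) (by simp) _
      fun i => sq_le_one_of_transpose_mul_self_eq_one hX _ i
    have hcut : (cutSize G S : ℝ) ≤ maxCut G := by exact_mod_cast cutSize_le_maxCut G S
    rw [signVector_dotProduct_one_sub_adjMatrix_mulVec] at hS
    linarith

/-- The maximum of `diag(X)ᵀ (I_k − A) diag(X)` over the Stiefel manifold `V(k,n)`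
equals `4κ(G) − 2|E| + k`. -/
theorem stmt8 (k n : ℕ) (hk : 0 < k) (hkn : k ≤ n)
    (G : SimpleGraph (Fin k)) [DecidableRel G.Adj] :
    IsGreatest {y : ℝ | ∃ X : Matrix (Fin n) (Fin k) ℝ, Xᵀ * X = 1 ∧
        y = (fun i : Fin k => X (Fin.castLE hkn i) i) ⬝ᵥ
          ((1 - G.adjMatrix ℝ) *ᵥ (fun i : Fin k => X (Fin.castLE hkn i) i))}
      (4 * (maxCut G : ℝ) - 2 * (G.edgeFinset.card : ℝ) + k) :=
  stmt8_general k n hkn G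
end

section
/- Let k ≤ n be positive integers and let G be a simple graph on vertex set {1,…,k} with adjacency matrix A ∈ ℝ^{k×k}. Then the maximum of diag(X)ᵀ (I_k − A) diag(X) over X ∈ V(k,n) equals the maximum of xᵀ (I_k − A) x over x ∈ [−1,1]^k. -/
open Matrix

private lemma quad_update' (k : ℕ) (M : Matrix (Fin k) (Fin k) ℝ) (i : Fin k) (hMi : M i i = 1)
    (x : Fin k → ℝ) (t : ℝ) :
    Function.update x i t ⬝ᵥ (M *ᵥ Function.update x i t) =
      (Function.update x i 0 ⬝ᵥ (M *ᵥ Function.update x i 0)) +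
      t * ((Pi.single i (1:ℝ)) ⬝ᵥ (M *ᵥ Function.update x i 0) +
           Function.update x i 0 ⬝ᵥ (M *ᵥ (Pi.single i (1:ℝ)))) + t ^ 2 := by
  have hd : Function.update x i t = Function.update x i 0 + t • (Pi.single i 1 : Fin k → ℝ) := by
    funext j
    by_cases h : j = i
    · subst h; simp
    · simp [Function.update_of_ne h, Pi.single_eq_of_ne h]
  have he : (Pi.single i (1:ℝ)) ⬝ᵥ (M *ᵥ Pi.single i (1:ℝ)) = 1 := by
    simp [Matrix.mulVec_single, single_dotProduct, hMi]
  rw [hd]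
  simp only [Matrix.mulVec_add, Matrix.mulVec_smul, dotProduct_add, add_dotProduct,
    dotProduct_smul, smul_dotProduct, smul_eq_mul]
  nlinarith [he]

private lemma endpoint_bound' (c L t : ℝ) (ht : t ∈ Set.Icc (-1:ℝ) 1) :
    c + t * L + t ^ 2 ≤ max (c + 1 * L + 1 ^ 2) (c + (-1) * L + (-1) ^ 2) := by
  obtain ⟨h1, h2⟩ := ht
  rcases le_total 0 L with h | h
  · exact le_max_of_le_left (by nlinarith)
  · exact le_max_of_le_right (by nlinarith)

private lemma to_vertex' (k : ℕ) (M : Matrix (Fin k) (Fin k) ℝ) (hM : ∀ i, M i i = 1)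
    (s : Finset (Fin k)) :
    ∀ x : Fin k → ℝ, (∀ i, x i ∈ Set.Icc (-1:ℝ) 1) → (∀ i ∉ s, x i = 1 ∨ x i = -1) →
    ∃ v : Fin k → ℝ, (∀ i, v i = 1 ∨ v i = -1) ∧ x ⬝ᵥ (M *ᵥ x) ≤ v ⬝ᵥ (M *ᵥ v) := by
  induction s using Finset.induction_on with
  | empty => exact fun x hx hv => ⟨x, fun i => hv i (Finset.notMem_empty i), le_rfl⟩
  | @insert a s ha ih =>
    intro x hx hv
    have key : x ⬝ᵥ (M *ᵥ x) ≤
        max (Function.update x a 1 ⬝ᵥ (M *ᵥ Function.update x a 1))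
            (Function.update x a (-1) ⬝ᵥ (M *ᵥ Function.update x a (-1))) := by
      have hx0 : x ⬝ᵥ (M *ᵥ x) =
          Function.update x a (x a) ⬝ᵥ (M *ᵥ Function.update x a (x a)) := by
        rw [Function.update_eq_self]
      rw [hx0, quad_update' k M a (hM a) x (x a), quad_update' k M a (hM a) x 1,
        quad_update' k M a (hM a) x (-1)]
      exact endpoint_bound' _ _ _ (hx a)
    have hbox : ∀ t : ℝ, t ∈ Set.Icc (-1:ℝ) 1 →
        ∀ i, Function.update x a t i ∈ Set.Icc (-1:ℝ) 1 := by
      intro t ht i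
      by_cases h : i = a
      · subst h; simpa using ht
      · simpa [Function.update_of_ne h] using hx i
    have hout : ∀ t : ℝ, (t = 1 ∨ t = -1) →
        ∀ i ∉ s, Function.update x a t i = 1 ∨ Function.update x a t i = -1 := by
      intro t ht i hi
      by_cases h : i = a
      · subst h; simpa using ht
      · rw [Function.update_of_ne h]
        exact hv i (by simp [Finset.mem_insert, h, hi])
    obtain ⟨v1, hv1, hle1⟩ := ih (Function.update x a 1)
      (hbox 1 (by norm_num)) (hout 1 (Or.inl rfl))
    obtain ⟨v2, hv2, hle2⟩ := ih (Function.update x a (-1))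
      (hbox (-1) (by norm_num)) (hout (-1) (Or.inr rfl))
    rcases max_cases (Function.update x a 1 ⬝ᵥ (M *ᵥ Function.update x a 1))
        (Function.update x a (-1) ⬝ᵥ (M *ᵥ Function.update x a (-1))) with ⟨heq, _⟩ | ⟨heq, _⟩
    · exact ⟨v1, hv1, by rw [heq] at key; linarith⟩
    · exact ⟨v2, hv2, by rw [heq] at key; linarith⟩

/-- The maximum of `diag(X)ᵀ (I_k − A) diag(X)` over the Stiefel manifold `V(k,n)`
equals the maximum of `xᵀ (I_k − A) x` over the box `[−1,1]^k`. -/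
theorem stmt11 (k n : ℕ) (hk : 0 < k) (hkn : k ≤ n)
    (G : SimpleGraph (Fin k)) [DecidableRel G.Adj] :
    ∃ m : ℝ,
      IsGreatest {y : ℝ | ∃ X : Matrix (Fin n) (Fin k) ℝ, Xᵀ * X = 1 ∧
          y = (fun i : Fin k => X (Fin.castLE hkn i) i) ⬝ᵥ
            ((1 - G.adjMatrix ℝ) *ᵥ (fun i : Fin k => X (Fin.castLE hkn i) i))} m ∧
      IsGreatest {y : ℝ | ∃ x : Fin k → ℝ, (∀ i, x i ∈ Set.Icc (-1 : ℝ) 1) ∧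
          y = x ⬝ᵥ ((1 - G.adjMatrix ℝ) *ᵥ x)} m := by
  classical
  set M : Matrix (Fin k) (Fin k) ℝ := 1 - G.adjMatrix ℝ with hMdef
  have hM : ∀ i, M i i = 1 := by
    intro i
    simp [hMdef, Matrix.sub_apply, Matrix.one_apply_eq]
  set φ : (Fin k → Bool) → Fin k → ℝ := fun b i => if b i then 1 else -1 with hφdef
  have hφv : ∀ b i, φ b i = 1 ∨ φ b i = -1 := by
    intro b i
    by_cases h : b i <;> simp [hφdef, h]
  set F : (Fin k → ℝ) → ℝ := fun v => v ⬝ᵥ (M *ᵥ v) with hFdef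
  set s : Finset ℝ := Finset.univ.image (fun b : Fin k → Bool => F (φ b)) with hsdef
  have hsne : s.Nonempty := Finset.Nonempty.image Finset.univ_nonempty _
  set m : ℝ := s.max' hsne with hmdef
  -- every ±1 vertex value is ≤ m
  have hvb : ∀ v : Fin k → ℝ, (∀ i, v i = 1 ∨ v i = -1) → F v ≤ m := by
    intro v hv
    have hmem : F v ∈ s := by
      rw [hsdef, Finset.mem_image]
      refine ⟨fun i => if v i = 1 then true else false, Finset.mem_univ _, ?_⟩
      congr 1
      funext i
      by_cases h : v i = 1
      · simp [hφdef, h]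
      · have h2 : v i = -1 := (hv i).resolve_left h
        rw [h2]; simp [hφdef, h]
    exact Finset.le_max' s _ hmem
  -- every box value is ≤ m
  have hboxb : ∀ x : Fin k → ℝ, (∀ i, x i ∈ Set.Icc (-1:ℝ) 1) → F x ≤ m := by
    intro x hx
    obtain ⟨v, hv, hle⟩ := to_vertex' k M hM Finset.univ x hx (fun i hi => absurd (Finset.mem_univ i) hi)
    exact le_trans hle (hvb v hv)
  -- m is attained at a vertex
  obtain ⟨b, -, hb⟩ := Finset.mem_image.mp (s.max'_mem hsne)
  refine ⟨m, ⟨?_, ?_⟩, ⟨?_, ?_⟩⟩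
  · -- m ∈ Stiefel set
    refine ⟨Matrix.of (fun j i => if j = Fin.castLE hkn i then φ b i else 0), ?_, ?_⟩
    · ext i i'
      rw [Matrix.mul_apply]
      simp only [Matrix.transpose_apply, Matrix.of_apply, ite_mul, zero_mul, mul_ite, mul_zero]
      rw [Finset.sum_ite_eq' Finset.univ (Fin.castLE hkn i')
        (fun x => if x = Fin.castLE hkn i then φ b i * φ b i' else 0)]
      simp only [Finset.mem_univ, if_true]
      by_cases h : i = i'
      · subst h
        simp only [if_pos rfl, Matrix.one_apply_eq]
        rcases hφv b i with h1 | h1 <;> rw [h1] <;> norm_num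
      · rw [if_neg (fun hc => h ((Fin.castLE_injective hkn) hc).symm), Matrix.one_apply_ne h]
    · have hdiag : (fun i : Fin k =>
          Matrix.of (fun j i => if j = Fin.castLE hkn i then φ b i else 0) (Fin.castLE hkn i) i)
          = φ b := by
        funext i; simp
      rw [hdiag]; exact hb.symm
  · -- upper bound on Stiefel set
    rintro y ⟨X, hX, rfl⟩
    apply hboxb
    intro i
    have h1 : (∑ j, X j i * X j i) = 1 := by
      have := congrFun (congrFun hX i) i
      rw [Matrix.mul_apply] at this
      simpa [Matrix.transpose_apply, Matrix.one_apply_eq] using this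
    have h2 : X (Fin.castLE hkn i) i * X (Fin.castLE hkn i) i ≤ 1 := by
      rw [← h1]
      exact Finset.single_le_sum (fun j _ => mul_self_nonneg (X j i)) (Finset.mem_univ _)
    have h3 : |X (Fin.castLE hkn i) i| ≤ 1 :=
      abs_le_one_iff_mul_self_le_one.mpr h2
    exact abs_le.mp h3
  · -- m ∈ box set
    exact ⟨φ b, fun i => by rcases hφv b i with h | h <;> rw [h] <;> norm_num,
      hb.symm⟩
  · -- upper bound on box set
    rintro y ⟨x, hx, rfl⟩
    exact hboxb x hx
end

section
/- Let G be a simple graph on vertex set {1,…,n} with at least one edge, and let b > 0. Then the maximum of Σ_{(i,j): i∼j} x_i x_j (the sum taken over ordered pairs of adjacent vertices, so each undirected edge is counted twice) over all x ∈ ℝ^n with x_1 + … + x_n = b and x_i ≥ 0 for all i, equals b²(1 − 1/ω(G)), where ω(G) is the clique number of G. -/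
private def qf {n : ℕ} (w : Fin n → Fin n → ℝ) (x : Fin n → ℝ) : ℝ := ∑ i, ∑ j, w i j * x i * x j

private lemma qf_shift {n : ℕ} (w : Fin n → Fin n → ℝ) (hs : ∀ a b, w a b = w b a)
    (i j : Fin n) (hii : w i i = 0) (hjj : w j j = 0) (hij : w i j = 0)
    (x : Fin n → ℝ) (t : ℝ) :
    qf w (fun k => x k + t * ((if k = i then 1 else 0) - (if k = j then 1 else 0)))
      = qf w x + 2 * t * ((∑ b, w i b * x b) - (∑ b, w j b * x b)) := by
  unfold qf
  have hji : w j i = 0 := by rw [hs]; exact hij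
  have pull : ∀ (c : Prop) [Decidable c] (g : Fin n → ℝ),
      (∑ k, (if c then g k else 0)) = if c then ∑ k, g k else 0 := by
    intro c _ g; split <;> simp
  simp only [mul_sub, mul_add, add_mul, sub_mul, mul_ite, ite_mul, mul_one, mul_zero,
    zero_mul, one_mul, Finset.sum_add_distrib, Finset.sum_sub_distrib,
    Finset.sum_ite_eq, Finset.sum_ite_eq', Finset.mem_univ, if_true, pull]
  have h1 : (∑ a, w a i * x a * t) = t * ∑ b, w i b * x b := by
    rw [Finset.mul_sum]; exact Finset.sum_congr rfl fun a _ => by rw [hs]; ring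
  have h2 : (∑ a, w a j * x a * t) = t * ∑ b, w j b * x b := by
    rw [Finset.mul_sum]; exact Finset.sum_congr rfl fun a _ => by rw [hs]; ring
  have h3 : (∑ b, w i b * t * x b) = t * ∑ b, w i b * x b := by
    rw [Finset.mul_sum]; exact Finset.sum_congr rfl fun a _ => by ring
  have h4 : (∑ b, w j b * t * x b) = t * ∑ b, w j b * x b := by
    rw [Finset.mul_sum]; exact Finset.sum_congr rfl fun a _ => by ring
  rw [h1, h2, h3, h4, hii, hjj, hij, hji]
  ring

private lemma qf_upper {n : ℕ} (G : SimpleGraph (Fin n)) [DecidableRel G.Adj]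
    (b : ℝ) (hb : 0 < b) :
    ∀ (m : ℕ) (s : Finset (Fin n)), s.card ≤ m →
      ∀ x : Fin n → ℝ, (∀ k, x k ≠ 0 → k ∈ s) → (∑ i, x i = b) → (∀ i, 0 ≤ x i) →
      qf (fun i j => if G.Adj i j then (1:ℝ) else 0) x ≤ b ^ 2 * (1 - 1 / (G.cliqueNum : ℝ)) := by
  set w : Fin n → Fin n → ℝ := fun i j => if G.Adj i j then (1:ℝ) else 0 with hw
  have hs : ∀ a c, w a c = w c a := by
    intro a c; simp only [hw]
    by_cases h : G.Adj a c
    · simp [h, h.symm]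
    · have h2 : ¬ G.Adj c a := fun hh => h hh.symm
      simp [h, h2]
  have hdiag : ∀ a, w a a = 0 := by intro a; simp [hw]
  intro m
  induction m with
  | zero =>
      intro s hs0 x hsupp hsum _
      have hs0' : s = ∅ := Finset.card_eq_zero.mp (Nat.le_zero.mp hs0)
      exfalso
      have : ∀ i, x i = 0 := fun i => by
        by_contra h; exact absurd (hsupp i h) (by simp [hs0'])
      simp [this] at hsum; exact hb.ne' (by linarith)
  | succ m ih =>
      intro s hcard x hsupp hsum hnn
      by_cases hcl : ∀ a c, x a ≠ 0 → x c ≠ 0 → a ≠ c → G.Adj a c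
      · -- support is a clique
        set S : Finset (Fin n) := Finset.univ.filter (fun k => x k ≠ 0) with hS
        have hSclique : G.IsClique ↑S := by
          intro a ha c hc hac
          simp only [hS, Finset.coe_filter, Set.mem_setOf_eq] at ha hc
          exact hcl a c ha.2 hc.2 hac
        have hSω : S.card ≤ G.cliqueNum := SimpleGraph.IsClique.card_le_cliqueNum (tc := hSclique)
        have hSsum : ∑ i ∈ S, x i = b := by
          rw [← hsum]
          apply Finset.sum_subset (Finset.subset_univ S)
          intro k _ hk; simp [hS] at hk; exact hk
        have hSne : 0 < S.card := by
          rcases Finset.eq_empty_or_nonempty S with h | h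
          · rw [h] at hSsum; simp at hSsum; exact absurd hSsum.symm hb.ne'
          · exact Finset.card_pos.mpr h
        have hval : qf w x = b ^ 2 - ∑ a, (x a) ^ 2 := by
          have : ∀ a c : Fin n, w a c * x a * x c
              = x a * x c - (if a = c then x a * x c else 0) := by
            intro a c
            by_cases hac : a = c
            · subst hac; simp [hdiag]
            · simp only [if_neg hac]
              by_cases ha : x a = 0
              · simp [ha, hw]
              · by_cases hc : x c = 0
                · simp [hc, hw]
                · simp [hw, hcl a c ha hc hac]
          unfold qf
          simp only [this, Finset.sum_sub_distrib]
          have hd : (∑ a, ∑ c, if a = c then x a * x c else 0) = ∑ a, x a ^ 2 := by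
            refine Finset.sum_congr rfl fun a _ => ?_
            rw [Finset.sum_ite_eq]
            simp [pow_two]
          rw [hd, ← Finset.sum_mul_sum, hsum]
          ring_nf
        have hcs : b ^ 2 ≤ S.card * ∑ a ∈ S, (x a) ^ 2 := by
          have := sq_sum_le_card_mul_sum_sq (s := S) (f := x)
          rwa [hSsum] at this
        have hsq : ∑ a ∈ S, (x a) ^ 2 = ∑ a, (x a) ^ 2 := by
          apply Finset.sum_subset (Finset.subset_univ S)
          intro k _ hk; simp [hS] at hk; simp [hk]
        have hω1 : (1:ℝ) ≤ (S.card : ℝ) := by exact_mod_cast hSne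
        have hωS : (S.card : ℝ) ≤ (G.cliqueNum : ℝ) := by exact_mod_cast hSω
        have hωpos : (0:ℝ) < (G.cliqueNum : ℝ) := lt_of_lt_of_le zero_lt_one (le_trans hω1 hωS)
        rw [hval, ← hsq]
        have h1 : b ^ 2 / (G.cliqueNum : ℝ) ≤ b ^ 2 / (S.card : ℝ) := by
          apply div_le_div_of_nonneg_left (by positivity) (by linarith) hωS
        have h2 : b ^ 2 / (S.card : ℝ) ≤ ∑ a ∈ S, (x a) ^ 2 := by
          rw [div_le_iff₀ (by linarith)]
          calc b ^ 2 ≤ S.card * ∑ a ∈ S, (x a) ^ 2 := hcs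
            _ = (∑ a ∈ S, (x a) ^ 2) * S.card := by ring
        have : b ^ 2 * (1 - 1 / (G.cliqueNum : ℝ)) = b ^ 2 - b ^ 2 / (G.cliqueNum : ℝ) := by
          field_simp
        rw [this]
        linarith
      · -- shift step
        push_neg at hcl
        obtain ⟨p, q, hp, hq, hpq, hnadj⟩ := hcl
        have key : ∀ i j : Fin n, x i ≠ 0 → x j ≠ 0 → i ≠ j → ¬ G.Adj i j →
            (∑ c, w j c * x c) ≤ (∑ c, w i c * x c) →
            qf w x ≤ b ^ 2 * (1 - 1 / (G.cliqueNum : ℝ)) := by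
          intro i j hi hj hij hnadj hA
          set y : Fin n → ℝ :=
            fun k => x k + x j * ((if k = i then 1 else 0) - (if k = j then 1 else 0)) with hy
          have hyi : y i = x i + x j := by simp [hy, hij]
          have hyj : y j = 0 := by simp [hy, hij.symm]
          have hyk : ∀ k, k ≠ i → k ≠ j → y k = x k := by intro k h1 h2; simp [hy, h1, h2]
          have hynn : ∀ k, 0 ≤ y k := by
            intro k
            by_cases h1 : k = i
            · rw [h1, hyi]; have := hnn i; have := hnn j; linarith
            · by_cases h2 : k = j
              · rw [h2, hyj]
              · rw [hyk k h1 h2]; exact hnn k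
          have hysum : ∑ k, y k = b := by
            simp only [hy]
            rw [Finset.sum_add_distrib, hsum]
            simp [mul_sub, Finset.mul_sum, mul_ite, Finset.sum_sub_distrib,
              Finset.sum_ite_eq', Finset.mem_univ]
          have hysupp : ∀ k, y k ≠ 0 → k ∈ s.erase j := by
            intro k hk
            by_cases h2 : k = j
            · exact absurd (h2 ▸ hyj) hk
            · refine Finset.mem_erase.mpr ⟨h2, ?_⟩
              by_cases h1 : k = i
              · subst h1; exact hsupp k hi
              · exact hsupp k (by rwa [hyk k h1 h2] at hk)
          have hcard' : (s.erase j).card ≤ m := by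
            have hjs : j ∈ s := hsupp j hj
            have := Finset.card_erase_of_mem hjs
            omega
          have hle := ih (s.erase j) hcard' y hysupp hysum hynn
          have hshift := qf_shift w hs i j (hdiag i) (hdiag j)
            (by simp [hw, hnadj]) x (x j)
          have : qf w x ≤ qf w y := by
            rw [hy, hshift]
            have hxj : 0 ≤ x j := hnn j
            nlinarith
          linarith
        rcases le_total (∑ c, w q c * x c) (∑ c, w p c * x c) with h | h
        · exact key p q hp hq hpq hnadj h
        · exact key q p hq hp hpq.symm (fun h' => hnadj (h'.symm)) h

/-- Motzkin–Straus with total mass `b`: for a graph with at least one edge, the maximum of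
`∑_{(i,j) adjacent} xᵢ xⱼ` (over ordered pairs, so each edge counted twice) over the
simplex `{x : ∑ xᵢ = b, xᵢ ≥ 0}` equals `b²(1 − 1/ω(G))`. -/
theorem stmt13 (n : ℕ) (G : SimpleGraph (Fin n)) [DecidableRel G.Adj]
    (hE : G.edgeSet.Nonempty) (b : ℝ) (hb : 0 < b) :
    IsGreatest {y : ℝ | ∃ x : Fin n → ℝ,
        (∑ i : Fin n, x i = b) ∧ (∀ i, 0 ≤ x i) ∧
        y = ∑ i : Fin n, ∑ j : Fin n, if G.Adj i j then x i * x j else 0}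
      (b ^ 2 * (1 - 1 / (G.cliqueNum : ℝ))) := by
  obtain ⟨e, he⟩ := hE
  induction e using Sym2.ind with
  | _ u v =>
    rw [SimpleGraph.mem_edgeSet] at he
    have hω2 : 2 ≤ G.cliqueNum := by
      have hcl : G.IsClique ({u, v} : Finset (Fin n)) := by
        rw [Finset.coe_pair]
        exact SimpleGraph.isClique_pair.mpr (fun _ => he)
      have hcard : ({u, v} : Finset (Fin n)).card = 2 := Finset.card_pair he.ne
      calc 2 = ({u, v} : Finset (Fin n)).card := hcard.symm
        _ ≤ G.cliqueNum := SimpleGraph.IsClique.card_le_cliqueNum (tc := hcl)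
    obtain ⟨K, hK⟩ := G.exists_isNClique_cliqueNum
    set ω := G.cliqueNum with hωdef
    have hωpos : (0:ℝ) < (ω : ℝ) := by exact_mod_cast lt_of_lt_of_le two_pos hω2
    set c : ℝ := b / ω with hc
    set x : Fin n → ℝ := fun k => if k ∈ K then c else 0 with hx
    have hxsum : ∑ i, x i = b := by
      simp only [hx]
      rw [Finset.sum_ite_mem, Finset.univ_inter, Finset.sum_const, hK.card_eq]
      simp only [nsmul_eq_mul, hc]
      field_simp
    have hxnn : ∀ i, 0 ≤ x i := by
      intro i; simp only [hx]
      split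
      · positivity
      · exact le_refl 0
    constructor
    · refine ⟨x, hxsum, hxnn, ?_⟩
      have hterm : ∀ a d : Fin n, (if G.Adj a d then x a * x d else 0)
          = if a ∈ K ∧ d ∈ K ∧ a ≠ d then c * c else 0 := by
        intro a d
        by_cases h1 : a ∈ K ∧ d ∈ K ∧ a ≠ d
        · obtain ⟨ha, hd, hne⟩ := h1
          have : G.Adj a d := hK.isClique ha hd hne
          simp [this, hx, ha, hd, hne]
        · rw [if_neg h1]
          by_cases h2 : G.Adj a d
          · rw [if_pos h2]
            have hne : a ≠ d := h2.ne
            by_cases ha : a ∈ K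
            · have hd : d ∉ K := fun hd => h1 ⟨ha, hd, hne⟩
              simp [hx, hd]
            · simp [hx, ha]
          · rw [if_neg h2]
      simp only [hterm]
      have hω1 : 1 ≤ ω := by omega
      have inner : ∀ a : Fin n, (∑ d, if a ∈ K ∧ d ∈ K ∧ a ≠ d then c * c else 0)
          = if a ∈ K then ((ω:ℝ) - 1) * (c * c) else 0 := by
        intro a
        by_cases ha : a ∈ K
        · rw [if_pos ha]
          have hcong : ∀ d : Fin n, (if a ∈ K ∧ d ∈ K ∧ a ≠ d then c * c else 0)
              = if d ∈ K.erase a then c * c else 0 := by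
            intro d
            refine if_congr ?_ rfl rfl
            rw [Finset.mem_erase]
            constructor
            · rintro ⟨_, hd, hne⟩; exact ⟨hne.symm, hd⟩
            · rintro ⟨hne, hd⟩; exact ⟨ha, hd, hne.symm⟩
          rw [Finset.sum_congr rfl fun d _ => hcong d, Finset.sum_ite_mem,
            Finset.univ_inter, Finset.sum_const, Finset.card_erase_of_mem ha,
            hK.card_eq, nsmul_eq_mul]
          rw [Nat.cast_sub hω1, Nat.cast_one]
        · simp [ha]
      rw [Finset.sum_congr rfl fun a _ => inner a, Finset.sum_ite_mem,
        Finset.univ_inter, Finset.sum_const, hK.card_eq, nsmul_eq_mul, hc]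
      field_simp
    · rintro y ⟨z, hzsum, hznn, rfl⟩
      have hup := qf_upper G b hb Finset.univ.card Finset.univ le_rfl z
        (fun k _ => Finset.mem_univ k) hzsum hznn
      unfold qf at hup
      have heq : (∑ i, ∑ j, if G.Adj i j then z i * z j else 0)
          = ∑ i, ∑ j, (if G.Adj i j then (1:ℝ) else 0) * z i * z j :=
        Finset.sum_congr rfl fun i _ => Finset.sum_congr rfl fun j _ => by
          split <;> ring
      rw [heq]
      exact hup
end

section
/- Let 0 = k_0 < k_1 < … < k_p < k_{p+1} = n be integers with n_j = k_j − k_{j−1}, and let a_1 > a_2 > … > a_{p+1} ≥ 0 be reals with a_1 > 0. Let c ∈ ℝ^n be the vector whose first n_1 entries equal a_1, next n_2 entries equal a_2, and so on, set b_j = c_1 + … + c_j for j = 1,…,n (so b_n = Σ_{j=1}^{p+1} n_j a_j), and let k be the smallest positive integer m such that j·b_n ≤ m·b_j for all j = 1,…,m. Let G be a simple graph on vertex set {1,…,n} with clique number ω(G) > k. Then the maximum of Σ_{(i,j): i∼j} x_{ii} x_{jj} (the sum taken over ordered pairs of adjacent vertices, so each undirected edge is counted twice) over all X ∈ Flag(k_1,…,k_p,n)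 equals b_n²(1 − 1/ω(G)). -/
open Matrix

private lemma sum_split1 {ι : Type*} [Fintype ι] [DecidableEq ι] (u : ι) (f : ι → ℝ) :
    ∑ x, f x = f u + ∑ x ∈ Finset.univ.erase u, f x :=
  (Finset.add_sum_erase _ f (Finset.mem_univ u)).symm

private lemma sum_split2 {ι : Type*} [Fintype ι] [DecidableEq ι] {u v : ι} (huv : u ≠ v)
    (f : ι → ℝ) :
    ∑ x, f x = f u + (f v + ∑ x ∈ (Finset.univ.erase u).erase v, f x) := by
  rw [sum_split1 u f, Finset.add_sum_erase _ f
    (Finset.mem_erase.2 ⟨Ne.symm huv, Finset.mem_univ v⟩)]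

private noncomputable def givens {ι : Type*} [DecidableEq ι] (u v : ι) (θ : ℝ) :
    Matrix ι ι ℝ :=
  fun x y => if x = u then (if y = u then Real.cos θ else if y = v then Real.sin θ else 0)
    else if x = v then (if y = u then -Real.sin θ else if y = v then Real.cos θ else 0)
    else if x = y then 1 else 0

private lemma givens_row_u {ι : Type*} [Fintype ι] [DecidableEq ι] {u v : ι} (huv : u ≠ v)
    (θ : ℝ) (w : ι → ℝ) :
    ∑ x, givens u v θ u x * w x = Real.cos θ * w u + Real.sin θ * w v := by
  rw [sum_split2 huv]
  have h0 : ∑ x ∈ (Finset.univ.erase u).erase v, givens u v θ u x * w x = 0 := by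
    apply Finset.sum_eq_zero
    intro x hx
    rcases Finset.mem_erase.1 hx with ⟨hxv, hx'⟩
    rcases Finset.mem_erase.1 hx' with ⟨hxu, -⟩
    simp [givens, hxu, hxv]
  rw [h0]
  simp [givens, huv, Ne.symm huv]

private lemma givens_orth {ι : Type*} [Fintype ι] [DecidableEq ι] {u v : ι} (huv : u ≠ v)
    (θ : ℝ) : (givens u v θ)ᵀ * (givens u v θ) = 1 := by
  ext a b
  rw [Matrix.mul_apply]
  simp only [Matrix.transpose_apply]
  rw [sum_split2 huv]
  have h0 : ∑ x ∈ (Finset.univ.erase u).erase v, givens u v θ x a * givens u v θ x b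
      = if a = b ∧ a ≠ u ∧ a ≠ v then 1 else 0 := by
    have : ∀ x ∈ (Finset.univ.erase u).erase v, givens u v θ x a * givens u v θ x b
        = if x = a then (if a = b ∧ a ≠ u ∧ a ≠ v then 1 else 0) else 0 := by
      intro x hx
      rcases Finset.mem_erase.1 hx with ⟨hxv, hx'⟩
      rcases Finset.mem_erase.1 hx' with ⟨hxu, -⟩
      simp only [givens, if_neg hxu, if_neg hxv]
      by_cases hxa : x = a
      · subst hxa
        by_cases hab : x = b
        · subst hab; simp [hxu, hxv]
        · simp [hab]
      · simp [hxa]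
    rw [Finset.sum_congr rfl this, Finset.sum_ite_eq' ((Finset.univ.erase u).erase v) a]
    by_cases hau : a = u
    · simp [hau, huv]
    · by_cases hav : a = v
      · simp [hav, Ne.symm huv]
      · simp [Finset.mem_erase, hau, hav]
  rw [h0]
  by_cases hau : a = u
  · by_cases hbu : b = u
    · simp [givens, hau, hbu, huv, Ne.symm huv, Matrix.one_apply]
      nlinarith [Real.sin_sq_add_cos_sq θ]
    · by_cases hbv : b = v
      · simp [givens, hau, hbv, huv, Ne.symm huv, Matrix.one_apply, hbu]
        ring
      · simp [givens, hau, hbu, hbv, huv, Ne.symm huv, Matrix.one_apply, Ne.symm hbu]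
  · by_cases hav : a = v
    · by_cases hbu : b = u
      · simp [givens, hav, hbu, huv, Ne.symm huv, Matrix.one_apply, hau]
        ring
      · by_cases hbv : b = v
        · simp [givens, hav, hbv, huv, Ne.symm huv, Matrix.one_apply]
          nlinarith [Real.sin_sq_add_cos_sq θ]
        · simp [givens, hav, hbu, hbv, huv, Ne.symm huv, Matrix.one_apply, Ne.symm hbv, hau]
    · by_cases hbu : b = u
      · simp [givens, hau, hav, hbu, Matrix.one_apply, huv, Ne.symm huv, Ne.symm hau]
      · by_cases hbv : b = v
        · simp [givens, hau, hav, hbv, Matrix.one_apply, huv, Ne.symm huv, Ne.symm hav]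
        · simp [givens, hau, hav, hbu, hbv, huv, Ne.symm huv, Matrix.one_apply]

private lemma sum_erase_eq_subtype {ι : Type*} [Fintype ι] [DecidableEq ι] (u : ι)
    (f : ι → ℝ) :
    ∑ x ∈ Finset.univ.erase u, f x = ∑ x : {x : ι // x ≠ u}, f x :=
  Finset.sum_subtype _ (fun x => by simp) f

private lemma givens_conj_uu {ι : Type*} [Fintype ι] [DecidableEq ι] {u v : ι} (huv : u ≠ v)
    (θ : ℝ) (A : Matrix ι ι ℝ) :
    (givens u v θ * A * (givens u v θ)ᵀ) u u =
      Real.cos θ * (Real.cos θ * A u u + Real.sin θ * A v u)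
      + Real.sin θ * (Real.cos θ * A u v + Real.sin θ * A v v) := by
  have h1 : ∀ y, (givens u v θ * A) u y = Real.cos θ * A u y + Real.sin θ * A v y := by
    intro y; rw [Matrix.mul_apply]; exact givens_row_u huv θ (fun x => A x y)
  rw [Matrix.mul_apply]
  have : ∀ y, (givens u v θ * A) u y * (givens u v θ)ᵀ y u
      = givens u v θ u y * ((givens u v θ * A) u y) := by
    intro y; rw [Matrix.transpose_apply]; ring
  rw [Finset.sum_congr rfl (fun y _ => this y),
    givens_row_u huv θ (fun y => (givens u v θ * A) u y), h1, h1]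

private noncomputable def oneExt {ι : Type*} [DecidableEq ι] (u : ι)
    (V : Matrix {x : ι // x ≠ u} {x : ι // x ≠ u} ℝ) : Matrix ι ι ℝ :=
  fun x y => if hx : x = u then (if y = u then 1 else 0)
    else if hy : y = u then 0 else V ⟨x, hx⟩ ⟨y, hy⟩

private lemma oneExt_orth {ι : Type*} [Fintype ι] [DecidableEq ι] (u : ι)
    {V : Matrix {x : ι // x ≠ u} {x : ι // x ≠ u} ℝ} (hV : Vᵀ * V = 1) :
    (oneExt u V)ᵀ * oneExt u V = 1 := by
  ext a b
  rw [Matrix.mul_apply]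
  simp only [Matrix.transpose_apply]
  rw [sum_split1 u]
  by_cases hau : a = u
  · by_cases hbu : b = u
    · subst hau; subst hbu
      rw [Finset.sum_eq_zero (fun x hx => by
        simp [oneExt, (Finset.mem_erase.1 hx).1])]
      simp [oneExt, Matrix.one_apply]
    · subst hau
      rw [Finset.sum_eq_zero (fun x hx => by
        simp [oneExt, (Finset.mem_erase.1 hx).1, hbu])]
      simp [oneExt, hbu, Ne.symm hbu, Matrix.one_apply]
  · by_cases hbu : b = u
    · subst hbu
      rw [Finset.sum_eq_zero (fun x hx => by
        simp [oneExt, (Finset.mem_erase.1 hx).1, hau])]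
      simp [oneExt, hau, Ne.symm hau, Matrix.one_apply]
    · have : ∀ x ∈ Finset.univ.erase u, oneExt u V x a * oneExt u V x b
          = (fun x : ι => if hx : x = u then 0 else V ⟨x, hx⟩ ⟨a, hau⟩ * V ⟨x, hx⟩ ⟨b, hbu⟩) x := by
        intro x hx
        have hxu := (Finset.mem_erase.1 hx).1
        simp [oneExt, hxu, hau, hbu]
      rw [Finset.sum_congr rfl this, sum_erase_eq_subtype]
      have : ∑ x : {x : ι // x ≠ u},
          (if hx : (x : ι) = u then 0 else V ⟨x, hx⟩ ⟨a, hau⟩ * V ⟨x, hx⟩ ⟨b, hbu⟩)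
          = ∑ x : {x : ι // x ≠ u}, V x ⟨a, hau⟩ * V x ⟨b, hbu⟩ := by
        apply Finset.sum_congr rfl
        intro x _
        simp [x.2]
      rw [this]
      have h2 := congrFun (congrFun hV ⟨a, hau⟩) ⟨b, hbu⟩
      rw [Matrix.mul_apply] at h2
      simp only [Matrix.transpose_apply] at h2
      rw [h2]
      simp [oneExt, hau, Matrix.one_apply, Subtype.ext_iff]

private lemma oneExt_conj_uu {ι : Type*} [Fintype ι] [DecidableEq ι] (u : ι)
    (V : Matrix {x : ι // x ≠ u} {x : ι // x ≠ u} ℝ) (B : Matrix ι ι ℝ) :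
    (oneExt u V * B * (oneExt u V)ᵀ) u u = B u u := by
  have hrow : ∀ y, oneExt u V u y = if y = u then 1 else 0 := by
    intro y; simp [oneExt]
  have h1 : ∀ y, (oneExt u V * B) u y = B u y := by
    intro y
    rw [Matrix.mul_apply]
    rw [Finset.sum_congr rfl (fun x _ => by rw [hrow x])]
    simp
  rw [Matrix.mul_apply]
  rw [Finset.sum_congr rfl (fun y _ => by
    rw [Matrix.transpose_apply, hrow y, h1 y])]
  simp

private lemma oneExt_conj_ne {ι : Type*} [Fintype ι] [DecidableEq ι] (u : ι)
    (V : Matrix {x : ι // x ≠ u} {x : ι // x ≠ u} ℝ) (B : Matrix ι ι ℝ)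
    (i : ι) (hi : i ≠ u) :
    (oneExt u V * B * (oneExt u V)ᵀ) i i
      = (V * B.submatrix (fun x : {x : ι // x ≠ u} => (x : ι))
          (fun x : {x : ι // x ≠ u} => (x : ι)) * Vᵀ) ⟨i, hi⟩ ⟨i, hi⟩ := by
  have hrow : ∀ y, oneExt u V i y = if hy : y = u then 0 else V ⟨i, hi⟩ ⟨y, hy⟩ :=
    fun y => by simp [oneExt, hi]
  have h1 : ∀ y, (oneExt u V * B) i y = ∑ x : {x : ι // x ≠ u}, V ⟨i, hi⟩ x * B x y := by
    intro y
    rw [Matrix.mul_apply, sum_split1 u]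
    have e1 : oneExt u V i u * B u y = 0 := by rw [hrow u]; simp
    have e2 : ∑ x ∈ Finset.univ.erase u, oneExt u V i x * B x y
        = ∑ x : {x : ι // x ≠ u}, V ⟨i, hi⟩ x * B x y := by
      rw [sum_erase_eq_subtype u (fun x => oneExt u V i x * B x y)]
      apply Finset.sum_congr rfl
      intro x _
      rw [hrow x, dif_neg x.2]
    rw [e1, e2, zero_add]
  rw [Matrix.mul_apply, sum_split1 u]
  have e1 : (oneExt u V * B) i u * (oneExt u V)ᵀ u i = 0 := by
    rw [Matrix.transpose_apply, hrow u]; simp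
  have e2 : ∑ y ∈ Finset.univ.erase u, (oneExt u V * B) i y * (oneExt u V)ᵀ y i
      = ∑ y : {y : ι // y ≠ u}, (∑ x : {x : ι // x ≠ u}, V ⟨i, hi⟩ x * B x y) * V ⟨i, hi⟩ y := by
    rw [sum_erase_eq_subtype u (fun y => (oneExt u V * B) i y * (oneExt u V)ᵀ y i)]
    apply Finset.sum_congr rfl
    intro y _
    rw [Matrix.transpose_apply, hrow y, dif_neg y.2, h1 y]
  rw [e1, e2, zero_add, Matrix.mul_apply]
  apply Finset.sum_congr rfl
  intro y _
  rw [Matrix.transpose_apply, Matrix.mul_apply]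
  congr 1

private lemma exists_const_diag (N : ℕ) : ∀ (ι : Type) [Fintype ι] [DecidableEq ι],
    Fintype.card ι = N → ∀ A : Matrix ι ι ℝ, Aᵀ = A →
    ∃ W : Matrix ι ι ℝ, Wᵀ * W = 1 ∧ ∀ i, (W * A * Wᵀ) i i = A.trace / N := by
  induction N with
  | zero =>
    intro ι _ _ hcard A _
    exact ⟨1, by simp, fun i => ((Fintype.card_eq_zero_iff.mp hcard).false i).elim⟩
  | succ N ih =>
    intro ι _ _ hcard A hA
    have hN1 : ((N : ℝ) + 1) ≠ 0 := by positivity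
    set μ := A.trace / ((N : ℝ) + 1) with hμ
    have hgoal : (A.trace / ((N + 1 : ℕ) : ℝ)) = μ := by rw [hμ]; push_cast; ring_nf
    have htr : A.trace = ((N : ℝ) + 1) * μ := by rw [hμ]; field_simp
    by_cases hall : ∀ i, A i i = μ
    · refine ⟨1, by simp, fun i => ?_⟩
      rw [hgoal]
      simpa using hall i
    · push_neg at hall
      obtain ⟨i₀, hi₀⟩ := hall
      have hdiagsum : ∑ i, A i i = ((N : ℝ) + 1) * μ := by
        rw [← htr]; rfl
      have hsum : ∑ i, (A i i - μ) = 0 := by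
        rw [Finset.sum_sub_distrib, hdiagsum, Finset.sum_const, Finset.card_univ, hcard]
        push_cast
        ring
      have key : ∃ u v : ι, u ≠ v ∧ μ ≤ A u u ∧ A v v ≤ μ := by
        rcases lt_trichotomy (A i₀ i₀) μ with hlt | heq | hgt
        · have h1 : (0 : ℝ) < ∑ x ∈ Finset.univ.erase i₀, (A x x - μ) := by
            have := sum_split1 i₀ (fun i => A i i - μ)
            rw [hsum] at this
            linarith
          have h2 : ∑ x ∈ Finset.univ.erase i₀, (0 : ℝ)
              < ∑ x ∈ Finset.univ.erase i₀, (A x x - μ) := by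
            simpa using h1
          obtain ⟨u, hu, hu2⟩ := Finset.exists_lt_of_sum_lt h2
          exact ⟨u, i₀, (Finset.mem_erase.1 hu).1, by linarith, by linarith⟩
        · exact absurd heq hi₀
        · have h1 : ∑ x ∈ Finset.univ.erase i₀, (A x x - μ) < 0 := by
            have := sum_split1 i₀ (fun i => A i i - μ)
            rw [hsum] at this
            linarith
          have h2 : ∑ x ∈ Finset.univ.erase i₀, (A x x - μ)
              < ∑ x ∈ Finset.univ.erase i₀, (0 : ℝ) := by
            simpa using h1
          obtain ⟨v, hv, hv2⟩ := Finset.exists_lt_of_sum_lt h2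
          exact ⟨i₀, v, Ne.symm (Finset.mem_erase.1 hv).1, by linarith, by linarith⟩
      obtain ⟨u, v, huv, hu, hv⟩ := key
      have hNpos : 1 ≤ N := by
        have h2 : 1 < Fintype.card ι := Fintype.one_lt_card_iff.mpr ⟨u, v, huv⟩
        omega
      have hNne : ((N : ℝ)) ≠ 0 := by
        have : (0 : ℝ) < (N : ℝ) := by exact_mod_cast hNpos
        linarith
      -- IVT for the Givens angle
      have hcont : Continuous (fun θ : ℝ =>
          Real.cos θ * (Real.cos θ * A u u + Real.sin θ * A v u)
          + Real.sin θ * (Real.cos θ * A u v + Real.sin θ * A v v)) := by fun_prop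
      have e0 : (fun θ : ℝ => Real.cos θ * (Real.cos θ * A u u + Real.sin θ * A v u)
          + Real.sin θ * (Real.cos θ * A u v + Real.sin θ * A v v)) 0 = A u u := by
        norm_num
      have e1 : (fun θ : ℝ => Real.cos θ * (Real.cos θ * A u u + Real.sin θ * A v u)
          + Real.sin θ * (Real.cos θ * A u v + Real.sin θ * A v v)) (Real.pi / 2)
          = A v v := by
        norm_num
      have hmem : μ ∈ Set.Icc
          ((fun θ : ℝ => Real.cos θ * (Real.cos θ * A u u + Real.sin θ * A v u)
            + Real.sin θ * (Real.cos θ * A u v + Real.sin θ * A v v)) (Real.pi / 2))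
          ((fun θ : ℝ => Real.cos θ * (Real.cos θ * A u u + Real.sin θ * A v u)
            + Real.sin θ * (Real.cos θ * A u v + Real.sin θ * A v v)) 0) := by
        rw [e0, e1]; exact ⟨hv, hu⟩
      obtain ⟨θ, -, hθ⟩ := intermediate_value_Icc'
        (by linarith [Real.pi_pos] : (0:ℝ) ≤ Real.pi / 2) hcont.continuousOn hmem
      set Bm := givens u v θ * A * (givens u v θ)ᵀ with hBm
      have hBuu : Bm u u = μ := by rw [hBm, givens_conj_uu huv θ A]; exact hθ
      have hBsym : Bmᵀ = Bm := by
        rw [hBm, Matrix.transpose_mul, Matrix.transpose_mul, Matrix.transpose_transpose, hA,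
          Matrix.mul_assoc]
      have hBtr : Bm.trace = A.trace := by
        rw [hBm, Matrix.trace_mul_comm, ← Matrix.mul_assoc, givens_orth huv θ,
          Matrix.one_mul]
      have hcard' : Fintype.card {x : ι // x ≠ u} = N := by
        have h1 : Fintype.card {x : ι // ¬ (x = u)} =
            Fintype.card ι - Fintype.card {x : ι // x = u} :=
          Fintype.card_subtype_compl _
        rw [Fintype.card_subtype_eq, hcard] at h1
        simpa using h1
      set A' := Bm.submatrix (fun x : {x : ι // x ≠ u} => (x : ι))
          (fun x : {x : ι // x ≠ u} => (x : ι)) with hA'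
      have hA'sym : A'ᵀ = A' := by
        ext i j
        simp only [hA', Matrix.transpose_apply, Matrix.submatrix_apply]
        exact congrFun (congrFun hBsym _) _
      have hA'tr : A'.trace = (N : ℝ) * μ := by
        have h3 := sum_split1 u (fun x => Bm x x)
        rw [sum_erase_eq_subtype u (fun x => Bm x x)] at h3
        have h2 : ∑ x : ι, Bm x x = ((N : ℝ) + 1) * μ := by
          have hh : Bm.trace = ((N : ℝ) + 1) * μ := by rw [hBtr, htr]
          simpa [Matrix.trace, Matrix.diag] using hh
        have h1 : A'.trace = ∑ x : {x : ι // x ≠ u}, Bm x x := by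
          simp [Matrix.trace, Matrix.diag, hA']
        rw [h1]
        rw [h2, hBuu] at h3
        linarith
      obtain ⟨V, hVorth, hVdiag⟩ := ih {x : ι // x ≠ u} hcard' A' hA'sym
      refine ⟨oneExt u V * givens u v θ, ?_, ?_⟩
      · rw [Matrix.transpose_mul, Matrix.mul_assoc, ← Matrix.mul_assoc (oneExt u V)ᵀ,
          oneExt_orth u hVorth, Matrix.one_mul, givens_orth huv θ]
      · intro i
        have hconj : oneExt u V * givens u v θ * A * (oneExt u V * givens u v θ)ᵀ
            = oneExt u V * Bm * (oneExt u V)ᵀ := by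
          rw [Matrix.transpose_mul, hBm]
          simp only [Matrix.mul_assoc]
        rw [hconj, hgoal]
        by_cases hiu : i = u
        · rw [hiu, oneExt_conj_uu u V Bm, hBuu]
        · rw [oneExt_conj_ne u V Bm i hiu]
          have hdd := hVdiag ⟨i, hiu⟩
          rw [hA'tr, mul_div_cancel_left₀ μ hNne] at hdd
          exact hdd

section MS

variable {n : ℕ} (G : SimpleGraph (Fin n)) [DecidableRel G.Adj]

private noncomputable def adjMat : Matrix (Fin n) (Fin n) ℝ :=
  Matrix.of fun i j => if G.Adj i j then (1 : ℝ) else 0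

private lemma adjMat_symm (i j : Fin n) : adjMat G i j = adjMat G j i := by
  simp [adjMat, G.adj_comm]

private lemma quadForm_eq (y : Fin n → ℝ) :
    (∑ i, ∑ j, if G.Adj i j then y i * y j else 0) = y ⬝ᵥ (adjMat G).mulVec y := by
  simp only [dotProduct, Matrix.mulVec, Finset.mul_sum]
  apply Finset.sum_congr rfl
  intro i _
  apply Finset.sum_congr rfl
  intro j _
  by_cases h : G.Adj i j <;> simp [adjMat, h, mul_comm]

private lemma dotProduct_mulVec_comm (y z : Fin n → ℝ) :
    y ⬝ᵥ (adjMat G).mulVec z = z ⬝ᵥ (adjMat G).mulVec y := by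
  simp only [dotProduct, Matrix.mulVec, Finset.mul_sum]
  rw [Finset.sum_comm]
  apply Finset.sum_congr rfl
  intro i _
  apply Finset.sum_congr rfl
  intro j _
  rw [adjMat_symm]
  ring

private lemma ms_shift_eq (x : Fin n → ℝ) (u v : Fin n) (huv : u ≠ v)
    (hadj : ¬ G.Adj u v)
    (x' : Fin n → ℝ)
    (hx' : x' = fun i => if i = v then 0 else if i = u then x u + x v else x i) :
    (∑ i, ∑ j, if G.Adj i j then x' i * x' j else 0)
      = (∑ i, ∑ j, if G.Adj i j then x i * x j else 0)
        + 2 * x v * (((adjMat G).mulVec x) u - ((adjMat G).mulVec x) v) := by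
  classical
  set d : Fin n → ℝ :=
    fun i => x v * ((if i = u then 1 else 0) - (if i = v then 1 else 0)) with hd
  have hx'd : x' = fun i => x i + d i := by
    funext i
    rw [hx', hd]
    by_cases hiv : i = v
    · subst hiv; simp [Ne.symm huv]
    · by_cases hiu : i = u
      · subst hiu; simp [hiv]
      · simp [hiu, hiv]
  have hdot : ∀ w : Fin n → ℝ, d ⬝ᵥ w = x v * (w u - w v) := by
    intro w
    rw [dotProduct, sum_split2 huv]
    rw [Finset.sum_eq_zero (fun i hi => by
      have h1 := (Finset.mem_erase.1 hi).1
      have h2 := (Finset.mem_erase.1 (Finset.mem_erase.1 hi).2).1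
      simp [hd, h1, h2])]
    simp [hd, huv, Ne.symm huv]
    ring
  have hrowu : ((adjMat G).mulVec d) u = 0 := by
    have h1 : ((adjMat G).mulVec d) u = d ⬝ᵥ (fun j => adjMat G u j) := by
      rw [Matrix.mulVec, dotProduct, dotProduct]
      exact Finset.sum_congr rfl (fun j _ => mul_comm _ _)
    rw [h1, hdot]
    have h2 : adjMat G u u = 0 := by simp [adjMat]
    have h3 : adjMat G u v = 0 := by simp [adjMat, hadj]
    rw [h2, h3]
    ring
  have hrowv : ((adjMat G).mulVec d) v = 0 := by
    have h1 : ((adjMat G).mulVec d) v = d ⬝ᵥ (fun j => adjMat G v j) := by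
      rw [Matrix.mulVec, dotProduct, dotProduct]
      exact Finset.sum_congr rfl (fun j _ => mul_comm _ _)
    rw [h1, hdot]
    have h2 : adjMat G v v = 0 := by simp [adjMat]
    have h3 : adjMat G v u = 0 := by
      rw [adjMat_symm]
      simp [adjMat, hadj]
    rw [h2, h3]
    ring
  rw [quadForm_eq, quadForm_eq, hx'd]
  have hxd : (fun i => x i + d i) = x + d := rfl
  rw [hxd, Matrix.mulVec_add, dotProduct_add, add_dotProduct,
    add_dotProduct, dotProduct_mulVec_comm G x d]
  have e1 : d ⬝ᵥ (adjMat G).mulVec x = x v * (((adjMat G).mulVec x) u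
      - ((adjMat G).mulVec x) v) := hdot _
  have e2 : d ⬝ᵥ (adjMat G).mulVec d = 0 := by
    rw [hdot, hrowu, hrowv]
    ring
  rw [e1, e2]
  ring

private lemma motzkin_straus (hω : 1 ≤ G.cliqueNum) :
    ∀ (s : ℕ) (x : Fin n → ℝ), (∀ i, 0 ≤ x i) →
      (Finset.univ.filter (fun i => x i ≠ 0)).card ≤ s →
      (∑ i, ∑ j, if G.Adj i j then x i * x j else 0)
        ≤ (∑ i, x i) ^ 2 * (1 - 1 / (G.cliqueNum : ℝ)) := by
  have hωR : (0 : ℝ) < (G.cliqueNum : ℝ) := by exact_mod_cast hω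
  intro s
  induction s with
  | zero =>
    intro x hx hcard
    have hx0 : ∀ i, x i = 0 := by
      intro i
      by_contra h
      have h1 : i ∈ Finset.univ.filter (fun i => x i ≠ 0) := by simp [h]
      have h2 := Finset.card_pos.2 ⟨i, h1⟩
      omega
    simp [hx0]
  | succ s ih =>
    intro x hx hcard
    set S := Finset.univ.filter (fun i => x i ≠ 0) with hS
    by_cases hclique : G.IsClique ↑S
    · -- clique case: direct bound
      have hzero : ∀ i, i ∉ S → x i = 0 := by
        intro i hi
        by_contra h
        exact hi (by simp [hS, h])
      have hsum : ∑ i, x i = ∑ i ∈ S, x i :=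
        (Finset.sum_subset (Finset.subset_univ S) (fun i _ hi => hzero i hi)).symm
      have hLHS : (∑ i, ∑ j, if G.Adj i j then x i * x j else 0)
          = ∑ i ∈ S, ∑ j ∈ S, (if G.Adj i j then x i * x j else 0) := by
        rw [← Finset.sum_subset (Finset.subset_univ S) (fun i _ hi => ?_)]
        · apply Finset.sum_congr rfl
          intro i _
          rw [← Finset.sum_subset (Finset.subset_univ S) (fun j _ hj => ?_)]
          by_cases h : G.Adj i j <;> simp [h, hzero j hj]
        · apply Finset.sum_eq_zero
          intro j _
          by_cases h : G.Adj i j <;> simp [h, hzero i hi]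
      have hLHS2 : (∑ i, ∑ j, if G.Adj i j then x i * x j else 0)
          = (∑ i ∈ S, x i) ^ 2 - ∑ i ∈ S, (x i) ^ 2 := by
        rw [hLHS]
        have step : ∀ i ∈ S, (∑ j ∈ S, if G.Adj i j then x i * x j else 0)
            = (∑ j ∈ S, x i * x j) - x i * x i := by
          intro i hi
          have hterm : ∀ j ∈ S, (if G.Adj i j then x i * x j else 0)
              = x i * x j - (if j = i then x i * x j else 0) := by
            intro j hj
            by_cases hij : j = i
            · subst hij
              simp [SimpleGraph.irrefl]
            · have hadj : G.Adj i j := hclique (Finset.mem_coe.2 hi)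
                (Finset.mem_coe.2 hj) (fun h => hij h.symm)
              simp [hadj, hij]
          rw [Finset.sum_congr rfl hterm, Finset.sum_sub_distrib,
            Finset.sum_ite_eq' S i (fun j => x i * x j), if_pos hi]
        rw [Finset.sum_congr rfl step, Finset.sum_sub_distrib]
        congr 1
        · rw [sq, Finset.sum_mul_sum]
        · exact Finset.sum_congr rfl (fun i _ => (pow_two (x i)).symm)
      have hcard_le : S.card ≤ G.cliqueNum :=
        SimpleGraph.IsClique.card_le_cliqueNum (tc := hclique)
      have hCS : (∑ i ∈ S, x i) ^ 2 ≤ (S.card : ℝ) * ∑ i ∈ S, (x i) ^ 2 := by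
        exact sq_sum_le_card_mul_sum_sq (s := S) (f := x)
      have hQ0 : (0 : ℝ) ≤ ∑ i ∈ S, (x i) ^ 2 := by positivity
      have hcard_leR : (S.card : ℝ) ≤ (G.cliqueNum : ℝ) := by exact_mod_cast hcard_le
      have hT2 : (∑ i ∈ S, x i) ^ 2 ≤ (∑ i ∈ S, (x i) ^ 2) * (G.cliqueNum : ℝ) := by
        calc (∑ i ∈ S, x i) ^ 2 ≤ (S.card : ℝ) * ∑ i ∈ S, (x i) ^ 2 := hCS
          _ ≤ (G.cliqueNum : ℝ) * ∑ i ∈ S, (x i) ^ 2 := by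
              exact mul_le_mul_of_nonneg_right hcard_leR hQ0
          _ = (∑ i ∈ S, (x i) ^ 2) * (G.cliqueNum : ℝ) := mul_comm _ _
      have hdivle : (∑ i ∈ S, x i) ^ 2 / (G.cliqueNum : ℝ) ≤ ∑ i ∈ S, (x i) ^ 2 :=
        (div_le_iff₀ hωR).2 hT2
      have hexpand : (∑ i ∈ S, x i) ^ 2 * (1 - 1 / (G.cliqueNum : ℝ))
          = (∑ i ∈ S, x i) ^ 2 - (∑ i ∈ S, x i) ^ 2 / (G.cliqueNum : ℝ) := by
        ring
      rw [hLHS2, hsum, hexpand]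
      linarith
    · -- non-clique case: shift mass and use induction hypothesis
      have main : ∀ u v : Fin n, u ∈ S → v ∈ S → u ≠ v → ¬ G.Adj u v →
          ((adjMat G).mulVec x) v ≤ ((adjMat G).mulVec x) u →
          (∑ i, ∑ j, if G.Adj i j then x i * x j else 0)
            ≤ (∑ i, x i) ^ 2 * (1 - 1 / (G.cliqueNum : ℝ)) := by
        intro u v hu hv huv hadj hL
        set x' : Fin n → ℝ :=
          fun i => if i = v then 0 else if i = u then x u + x v else x i with hx'
        have hxv0 : 0 ≤ x v := hx v
        have key := ms_shift_eq G x u v huv hadj x' hx'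
        have hmono : (∑ i, ∑ j, if G.Adj i j then x i * x j else 0)
            ≤ (∑ i, ∑ j, if G.Adj i j then x' i * x' j else 0) := by
          rw [key]
          nlinarith
        have hx'nn : ∀ i, 0 ≤ x' i := by
          intro i
          rw [hx']
          by_cases hiv : i = v
          · simp [hiv]
          · by_cases hiu : i = u
            · simp [hiv, hiu, huv]
              exact add_nonneg (hx u) (hx v)
            · simp [hiv, hiu]
              exact hx i
        have hsupp : Finset.univ.filter (fun i => x' i ≠ 0) ⊆ S.erase v := by
          intro i hi
          rw [Finset.mem_filter] at hi
          rcases hi with ⟨-, hi⟩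
          rw [hx'] at hi
          by_cases hiv : i = v
          · simp [hiv] at hi
          · by_cases hiu : i = u
            · exact Finset.mem_erase.2 ⟨hiv, hiu ▸ hu⟩
            · simp [hiv, hiu] at hi
              exact Finset.mem_erase.2 ⟨hiv, by simp [hS, hi]⟩
        have hcard' : (Finset.univ.filter (fun i => x' i ≠ 0)).card ≤ s := by
          have h1 := Finset.card_le_card hsupp
          have h2 : (S.erase v).card = S.card - 1 := Finset.card_erase_of_mem hv
          have h3 : 1 ≤ S.card := Finset.card_pos.2 ⟨v, hv⟩
          omega
        have hsum' : ∑ i, x' i = ∑ i, x i := by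
          rw [sum_split2 huv x', sum_split2 huv x]
          have e1 : x' u = x u + x v := by rw [hx']; simp [huv]
          have e2 : x' v = 0 := by rw [hx']; simp
          have e3 : ∑ i ∈ (Finset.univ.erase u).erase v, x' i
              = ∑ i ∈ (Finset.univ.erase u).erase v, x i := by
            apply Finset.sum_congr rfl
            intro i hi
            have h1 := (Finset.mem_erase.1 hi).1
            have h2 := (Finset.mem_erase.1 (Finset.mem_erase.1 hi).2).1
            rw [hx']
            simp [h1, h2]
          rw [e1, e2, e3]
          ring
        have := ih x' hx'nn hcard'
        rw [hsum'] at this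
        exact le_trans hmono this
      rw [SimpleGraph.isClique_iff] at hclique
      unfold Set.Pairwise at hclique
      push_neg at hclique
      obtain ⟨u, hu, v, hv, huv, hadj⟩ := hclique
      have hu' : u ∈ S := Finset.mem_coe.1 hu
      have hv' : v ∈ S := Finset.mem_coe.1 hv
      rcases le_total (((adjMat G).mulVec x) v) (((adjMat G).mulVec x) u) with hL | hL
      · exact main u v hu' hv' huv hadj hL
      · exact main v u hv' hu' (Ne.symm huv) (fun h => hadj h.symm) hL

end MS

private lemma conj_diag_entry {n : ℕ} (Q : Matrix (Fin n) (Fin n) ℝ) (c : Fin n → ℝ)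
    (i : Fin n) :
    (Q * Matrix.diagonal c * Qᵀ) i i = ∑ m, c m * Q i m ^ 2 := by
  rw [Matrix.mul_apply]
  refine Finset.sum_congr rfl fun m _ => ?_
  rw [Matrix.mul_diagonal, Matrix.transpose_apply]
  ring

/-- Clique number as unconstrained QP over a flag manifold: with
`0 = k₀ < k₁ < ⋯ < k_p < k_{p+1} = n`, parameters `a₁ > ⋯ > a_{p+1} ≥ 0`, `a₁ > 0`,
`c` the associated step vector, `B j = c₁ + ⋯ + c_j` the partial sums, and `K` the least
positive integer `m` with `j·B n ≤ m·B j` for all `1 ≤ j ≤ m`, if `ω(G) > K` then the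
maximum of `∑_{(i,j) adjacent} x_{ii} x_{jj}` (ordered pairs, each edge counted twice)
over `X ∈ Flag(k₁,…,k_p,n)` equals `(B n)²(1 − 1/ω(G))`. -/
theorem stmt14 (p n : ℕ)
    (k : Fin (p + 2) → ℕ) (hk0 : k 0 = 0) (hkn : k (Fin.last (p + 1)) = n)
    (hkmono : StrictMono k)
    (a : Fin (p + 1) → ℝ) (ha : StrictAnti a) (halast : 0 ≤ a (Fin.last p))
    (ha0 : 0 < a 0)
    (c : Fin n → ℝ)
    (hc : ∀ (j : Fin (p + 1)) (i : Fin n),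
      k j.castSucc ≤ (i : ℕ) → (i : ℕ) < k j.succ → c i = a j)
    (B : ℕ → ℝ)
    (hB : ∀ m : ℕ, B m = ∑ i ∈ Finset.univ.filter (fun i : Fin n => (i : ℕ) < m), c i)
    (K : ℕ)
    (hK : IsLeast {m : ℕ | 0 < m ∧
      ∀ j : ℕ, 1 ≤ j → j ≤ m → (j : ℝ) * B n ≤ (m : ℝ) * B j} K)
    (G : SimpleGraph (Fin n)) [DecidableRel G.Adj]
    (hω : K < G.cliqueNum) :
    IsGreatest {y : ℝ | ∃ X : Matrix (Fin n) (Fin n) ℝ,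
        (∃ Q : Matrix (Fin n) (Fin n) ℝ, Qᵀ * Q = 1 ∧
          X = Q * Matrix.diagonal c * Qᵀ) ∧
        y = ∑ i : Fin n, ∑ j : Fin n, if G.Adj i j then X i i * X j j else 0}
      ((B n) ^ 2 * (1 - 1 / (G.cliqueNum : ℝ))) := by
  classical
  have hKpos : 0 < K := hK.1.1
  have hω1 : 1 ≤ G.cliqueNum := by omega
  have hωR : (0 : ℝ) < (G.cliqueNum : ℝ) := by exact_mod_cast hω1
  have hωRne : (G.cliqueNum : ℝ) ≠ 0 := ne_of_gt hωR
  -- every index lies in some block, so c is nonnegative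
  have hblock : ∀ i : Fin n, ∃ j : Fin (p + 1),
      k j.castSucc ≤ (i : ℕ) ∧ (i : ℕ) < k j.succ := by
    intro i
    by_contra hcon
    push_neg at hcon
    have hall : ∀ j : Fin (p + 2), k j ≤ (i : ℕ) := by
      intro j
      induction j using Fin.induction with
      | zero => rw [hk0]; omega
      | succ j ihj => exact hcon j ihj
    have := hall (Fin.last (p + 1))
    rw [hkn] at this
    omega
  have hcnn : ∀ i : Fin n, 0 ≤ c i := by
    intro i
    obtain ⟨j, h1, h2⟩ := hblock i
    rw [hc j i h1 h2]
    exact le_trans halast (ha.antitone (Fin.le_last j))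
  have hBn : B n = ∑ i, c i := by
    rw [hB n]
    apply Finset.sum_congr ?_ (fun _ _ => rfl)
    ext i
    simp [i.isLt]
  -- c vanishes from index K on
  have hczero : ∀ i : Fin n, K ≤ (i : ℕ) → c i = 0 := by
    have hKK := hK.1.2 K (by omega) (le_refl K)
    have hKR : (0 : ℝ) < (K : ℝ) := by exact_mod_cast hKpos
    have hBnK : B n ≤ B K := by nlinarith
    have hsplit := Finset.sum_filter_add_sum_filter_not Finset.univ
      (fun i : Fin n => (i : ℕ) < K) c
    have htail : ∑ i ∈ Finset.univ.filter (fun i : Fin n => ¬ (i : ℕ) < K), c i = 0 := by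
      have h1 : ∑ i ∈ Finset.univ.filter (fun i : Fin n => ¬ (i : ℕ) < K), c i ≤ 0 := by
        rw [hB K] at hBnK
        rw [hBn] at hBnK
        linarith
      have h2 : 0 ≤ ∑ i ∈ Finset.univ.filter (fun i : Fin n => ¬ (i : ℕ) < K), c i :=
        Finset.sum_nonneg fun i _ => hcnn i
      linarith
    intro i hi
    have := (Finset.sum_eq_zero_iff_of_nonneg (fun i _ => hcnn i)).1 htail i
      (by simp; omega)
    exact this
  constructor
  · -- membership: construct the optimal matrix
    obtain ⟨S, hSclique, hScard⟩ := G.exists_isNClique_cliqueNum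
    have hωn : G.cliqueNum ≤ n := by
      have h1 := Finset.card_le_univ S
      rw [hScard] at h1
      simpa using h1
    set T : Finset (Fin n) := Finset.univ.filter (fun i => (i : ℕ) < G.cliqueNum) with hT
    have hTmem : ∀ m : Fin n, m ∈ T ↔ (m : ℕ) < G.cliqueNum := by
      intro m; simp [hT]
    have hTcard : T.card = G.cliqueNum := by
      have hbij : T = Finset.map (Fin.castLEEmb hωn) Finset.univ := by
        ext j
        simp only [Finset.mem_map, Finset.mem_univ, hTmem, true_and]
        constructor
        · intro hj
          exact ⟨⟨(j : ℕ), hj⟩, by ext; simp⟩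
        · rintro ⟨i, rfl⟩
          simpa using i.isLt
      rw [hbij, Finset.card_map, Finset.card_univ, Fintype.card_fin]
    have hcards : Fintype.card {i : Fin n // i ∈ S} = Fintype.card {i : Fin n // i ∈ T} := by
      rw [Fintype.card_coe, Fintype.card_coe, hScard, hTcard]
    set e : {i : Fin n // i ∈ S} ≃ {i : Fin n // i ∈ T} := Fintype.equivOfCardEq hcards
      with he
    set σ : Equiv.Perm (Fin n) := e.extendSubtype with hσ
    have hσS : ∀ i, i ∈ S → σ i ∈ T := fun i hi => e.extendSubtype_mem i hi
    have hσS' : ∀ i, i ∉ S → σ i ∉ T := fun i hi => e.extendSubtype_not_mem i hi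
    obtain ⟨W, hWorth, hWdiag⟩ := exists_const_diag G.cliqueNum {i : Fin n // i ∈ T}
      (by rw [Fintype.card_coe, hTcard])
      (Matrix.diagonal (fun m : {i : Fin n // i ∈ T} => c m.val))
      (Matrix.diagonal_transpose _)
    have hBωn : B (G.cliqueNum) = B n := by
      have hsplit := Finset.sum_filter_add_sum_filter_not Finset.univ
        (fun i : Fin n => (i : ℕ) < G.cliqueNum) c
      have htail : ∑ i ∈ Finset.univ.filter
          (fun i : Fin n => ¬ (i : ℕ) < G.cliqueNum), c i = 0 := by
        apply Finset.sum_eq_zero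
        intro i hi
        rw [Finset.mem_filter] at hi
        exact hczero i (by omega)
      rw [hB (G.cliqueNum), hBn]
      rw [← hsplit, htail]
      ring
    have htrace : (Matrix.diagonal (fun m : {i : Fin n // i ∈ T} => c m.val)).trace
        = B n := by
      rw [Matrix.trace_diagonal]
      rw [← Finset.sum_subtype T (fun x => Iff.rfl) c]
      rw [← hB (G.cliqueNum), hBωn]
    set t : ℝ := B n / (G.cliqueNum : ℝ) with ht
    set Q : Matrix (Fin n) (Fin n) ℝ := fun i m =>
      if hi : i ∈ S then (if hm : m ∈ T then W ⟨σ i, hσS i hi⟩ ⟨m, hm⟩ else 0)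
      else (if m = σ i then 1 else 0) with hQdef
    have hQrow_mem : ∀ i (hi : i ∈ S) m, Q i m
        = if hm : m ∈ T then W ⟨σ i, hσS i hi⟩ ⟨m, hm⟩ else 0 := by
      intro i hi m; rw [hQdef]; simp [hi]
    have hQrow_not : ∀ i, i ∉ S → ∀ m, Q i m = if m = σ i then 1 else 0 := by
      intro i hi m; rw [hQdef]; simp [hi]
    have hQorth : Qᵀ * Q = 1 := by
      ext a b
      rw [Matrix.mul_apply]
      simp only [Matrix.transpose_apply]
      rw [← Finset.sum_filter_add_sum_filter_not Finset.univ (fun i => i ∈ S)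
        (fun i => Q i a * Q i b)]
      by_cases haT : a ∈ T
      · by_cases hbT : b ∈ T
        · have h2 : ∑ i ∈ Finset.univ.filter (fun i => i ∉ S), Q i a * Q i b = 0 := by
            apply Finset.sum_eq_zero
            intro i hi
            rw [Finset.mem_filter] at hi
            rw [hQrow_not i hi.2]
            have : a ≠ σ i := fun h => (hσS' i hi.2) (h ▸ haT)
            simp [this]
          have h1 : ∑ i ∈ Finset.univ.filter (fun i => i ∈ S), Q i a * Q i b
              = ∑ i : {i : Fin n // i ∈ S},
                W (e i) ⟨a, haT⟩ * W (e i) ⟨b, hbT⟩ := by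
            rw [Finset.sum_subtype (p := fun i => i ∈ S)
              (Finset.univ.filter (fun i => i ∈ S))
              (fun x => by simp) (fun i => Q i a * Q i b)]
            apply Finset.sum_congr rfl
            intro i _
            rw [hQrow_mem i i.2, dif_pos haT, hQrow_mem i i.2, dif_pos hbT]
            have hei : (⟨σ i, hσS i i.2⟩ : {x : Fin n // x ∈ T}) = e i := by
              apply Subtype.ext
              simp only []
              rw [hσ]
              exact e.extendSubtype_apply_of_mem i i.2
            rw [hei]
          rw [h1, h2, add_zero]
          rw [Equiv.sum_comp e (fun x => W x ⟨a, haT⟩ * W x ⟨b, hbT⟩)]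
          have h3 := congrFun (congrFun hWorth ⟨a, haT⟩) ⟨b, hbT⟩
          rw [Matrix.mul_apply] at h3
          simp only [Matrix.transpose_apply] at h3
          rw [h3]
          rw [Matrix.one_apply, Matrix.one_apply]
          by_cases hab : a = b
          · simp [hab]
          · have hne : (⟨a, haT⟩ : {x : Fin n // x ∈ T}) ≠ ⟨b, hbT⟩ :=
              fun h => hab (congrArg Subtype.val h)
            simp [hab, hne]
        · -- a ∈ T, b ∉ T
          have h1 : ∑ i ∈ Finset.univ.filter (fun i => i ∈ S), Q i a * Q i b = 0 := by
            apply Finset.sum_eq_zero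
            intro i hi
            rw [Finset.mem_filter] at hi
            rw [hQrow_mem i hi.2, hQrow_mem i hi.2, dif_neg hbT]
            ring
          have h2 : ∑ i ∈ Finset.univ.filter (fun i => i ∉ S), Q i a * Q i b = 0 := by
            apply Finset.sum_eq_zero
            intro i hi
            rw [Finset.mem_filter] at hi
            rw [hQrow_not i hi.2]
            have : a ≠ σ i := fun h => (hσS' i hi.2) (h ▸ haT)
            simp [this]
          rw [h1, h2, add_zero]
          have hab : a ≠ b := fun h => hbT (h ▸ haT)
          rw [Matrix.one_apply, if_neg hab]
      · -- a ∉ T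
        have h1 : ∑ i ∈ Finset.univ.filter (fun i => i ∈ S), Q i a * Q i b = 0 := by
          apply Finset.sum_eq_zero
          intro i hi
          rw [Finset.mem_filter] at hi
          rw [hQrow_mem i hi.2, dif_neg haT]
          ring
        rw [h1, zero_add]
        have h2 : ∀ i ∈ Finset.univ.filter (fun i => i ∉ S), Q i a * Q i b
            = if i = σ.symm a then (if b = a then 1 else 0) else 0 := by
          intro i hi
          rw [Finset.mem_filter] at hi
          rw [hQrow_not i hi.2, hQrow_not i hi.2]
          by_cases hia : i = σ.symm a
          · have : a = σ i := by rw [hia]; simp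
            rw [if_pos hia, ← this]
            by_cases hba : b = a <;> simp [hba]
          · have : a ≠ σ i := by
              intro h
              exact hia (by rw [h]; simp)
            simp [this, hia]
        rw [Finset.sum_congr rfl h2, Finset.sum_ite_eq' _ (σ.symm a)]
        have hσa : σ.symm a ∉ S := by
          intro h
          have := hσS _ h
          simp only [Equiv.apply_symm_apply] at this
          exact haT this
        rw [if_pos (by simp [hσa])]
        rw [Matrix.one_apply]
        by_cases hab : a = b
        · simp [hab]
        · have hba : ¬ b = a := fun h => hab h.symm
          simp [hab, hba]
    -- the diagonal of the constructed matrix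
    have hdiag : ∀ i, (Q * Matrix.diagonal c * Qᵀ) i i = if i ∈ S then t else 0 := by
      intro i
      rw [conj_diag_entry]
      by_cases hi : i ∈ S
      · rw [if_pos hi]
        rw [← Finset.sum_filter_add_sum_filter_not Finset.univ (fun m => m ∈ T)
          (fun m => c m * Q i m ^ 2)]
        have h2 : ∑ m ∈ Finset.univ.filter (fun m => m ∉ T), c m * Q i m ^ 2 = 0 := by
          apply Finset.sum_eq_zero
          intro m hm
          rw [Finset.mem_filter] at hm
          rw [hQrow_mem i hi, dif_neg hm.2]
          ring
        have h1 : ∑ m ∈ Finset.univ.filter (fun m => m ∈ T), c m * Q i m ^ 2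
            = (W * Matrix.diagonal (fun m : {x : Fin n // x ∈ T} => c m.val) * Wᵀ)
              ⟨σ i, hσS i hi⟩ ⟨σ i, hσS i hi⟩ := by
          rw [Finset.sum_subtype (p := fun m => m ∈ T)
            (Finset.univ.filter (fun m => m ∈ T))
            (fun x => by simp) (fun m => c m * Q i m ^ 2)]
          rw [Matrix.mul_apply]
          apply Finset.sum_congr rfl
          intro m _
          rw [Matrix.mul_diagonal, Matrix.transpose_apply]
          rw [hQrow_mem i hi, dif_pos m.2]
          ring
        rw [h1, h2, add_zero, hWdiag, htrace, ht]
      · rw [if_neg hi]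
        have h2 : ∀ m, c m * Q i m ^ 2 = if m = σ i then c m * 1 else 0 := by
          intro m
          rw [hQrow_not i hi]
          by_cases hm : m = σ i <;> simp [hm]
        rw [Finset.sum_congr rfl (fun m _ => h2 m)]
        rw [Finset.sum_ite_eq' Finset.univ (σ i)]
        rw [if_pos (Finset.mem_univ _)]
        have : c (σ i) = 0 := by
          apply hczero
          have h3 := hσS' i hi
          rw [hTmem] at h3
          omega
        rw [this]
        ring
    refine ⟨Q * Matrix.diagonal c * Qᵀ, ⟨Q, hQorth, rfl⟩, ?_⟩
    -- compute the value
    have hval : ∀ i j, (if G.Adj i j then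
        (Q * Matrix.diagonal c * Qᵀ) i i * (Q * Matrix.diagonal c * Qᵀ) j j else 0)
        = if i ∈ S ∧ j ∈ S ∧ G.Adj i j then t ^ 2 else 0 := by
      intro i j
      rw [hdiag i, hdiag j]
      by_cases hadj : G.Adj i j
      · by_cases hiS : i ∈ S
        · by_cases hjS : j ∈ S
          · simp [hadj, hiS, hjS]; ring
          · simp [hadj, hiS, hjS]
        · simp [hadj, hiS]
      · simp [hadj]
    have hsum : ∑ i : Fin n, ∑ j : Fin n, (if G.Adj i j then
        (Q * Matrix.diagonal c * Qᵀ) i i * (Q * Matrix.diagonal c * Qᵀ) j j else 0)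
        = ((G.cliqueNum : ℝ) * ((G.cliqueNum : ℝ) - 1)) * t ^ 2 := by
      simp_rw [hval]
      have inner : ∀ i : Fin n, (∑ j : Fin n, if i ∈ S ∧ j ∈ S ∧ G.Adj i j then t ^ 2 else 0)
          = if i ∈ S then ((G.cliqueNum - 1 : ℕ) : ℝ) * t ^ 2 else 0 := by
        intro i
        by_cases hiS : i ∈ S
        · rw [if_pos hiS]
          have hcond : ∀ j : Fin n, (if i ∈ S ∧ j ∈ S ∧ G.Adj i j then t ^ 2 else 0)
              = if j ∈ S.erase i then t ^ 2 else 0 := by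
            intro j
            by_cases hj : j ∈ S.erase i
            · rw [Finset.mem_erase] at hj
              have hadj : G.Adj i j := hSclique (Finset.mem_coe.2 hiS)
                (Finset.mem_coe.2 hj.2) (fun h => hj.1 h.symm)
              rw [if_pos ⟨hiS, hj.2, hadj⟩, if_pos (Finset.mem_erase.2 hj)]
            · rw [if_neg hj,
                if_neg (fun h : i ∈ S ∧ j ∈ S ∧ G.Adj i j =>
                  hj (Finset.mem_erase.2 ⟨h.2.2.ne', h.2.1⟩))]
          rw [Finset.sum_congr rfl (fun j _ => hcond j)]
          rw [Finset.sum_ite_mem, Finset.univ_inter, Finset.sum_const,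
            Finset.card_erase_of_mem hiS, hScard, nsmul_eq_mul]
        · rw [if_neg hiS]
          apply Finset.sum_eq_zero
          intro j _
          rw [if_neg (fun h => hiS h.1)]
      rw [Finset.sum_congr rfl (fun i _ => inner i)]
      rw [Finset.sum_ite_mem, Finset.univ_inter, Finset.sum_const, hScard, nsmul_eq_mul]
      have hcast : ((G.cliqueNum - 1 : ℕ) : ℝ) = (G.cliqueNum : ℝ) - 1 := by
        rw [Nat.cast_sub hω1]
        norm_num
      rw [hcast]
      ring
    rw [hsum, ht]
    field_simp
  · -- upper bound via Motzkin–Straus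
    rintro y ⟨X, ⟨Q, hQ, rfl⟩, rfl⟩
    have hxnn : ∀ i, 0 ≤ (Q * Matrix.diagonal c * Qᵀ) i i := by
      intro i
      rw [conj_diag_entry]
      exact Finset.sum_nonneg fun m _ => mul_nonneg (hcnn m) (sq_nonneg _)
    have hcol : ∀ m, ∑ i, Q i m ^ 2 = 1 := by
      intro m
      have h1 := congrFun (congrFun hQ m) m
      rw [Matrix.mul_apply] at h1
      simp only [Matrix.transpose_apply, Matrix.one_apply_eq] at h1
      rw [← h1]
      exact Finset.sum_congr rfl fun i _ => pow_two (Q i m)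
    have hxsum : ∑ i, (Q * Matrix.diagonal c * Qᵀ) i i = B n := by
      rw [hBn]
      calc ∑ i, (Q * Matrix.diagonal c * Qᵀ) i i
          = ∑ i, ∑ m, c m * Q i m ^ 2 :=
            Finset.sum_congr rfl fun i _ => conj_diag_entry Q c i
        _ = ∑ m, ∑ i, c m * Q i m ^ 2 := Finset.sum_comm
        _ = ∑ m, c m * ∑ i, Q i m ^ 2 := by
            exact Finset.sum_congr rfl fun m _ => (Finset.mul_sum _ _ _).symm
        _ = ∑ m, c m := by
            exact Finset.sum_congr rfl fun m _ => by rw [hcol m, mul_one]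
    have hms := motzkin_straus G hω1 n (fun i => (Q * Matrix.diagonal c * Qᵀ) i i)
      hxnn (by
        calc (Finset.univ.filter _).card ≤ Finset.univ.card := Finset.card_filter_le _ _
          _ = n := by rw [Finset.card_univ, Fintype.card_fin])
    rw [hxsum] at hms
    exact hms
end

section
/- Let 0 = k_0 < k_1 < … < k_p < k_{p+1} = n be integers with n_j = k_j − k_{j−1}, and let a_1 > a_2 > … > a_{p+1} be reals. Let A ∈ ℝ^{n×n}, let (A + Aᵀ)/2 = Q Λ Qᵀ be an eigenvalue decomposition with Q ∈ O(n) and Λ = diag(λ_1,…,λ_n), λ_1 ≥ … ≥ λ_n, and let c ∈ ℝ^n be the vector whose first n_1 entries equal a_1, next n_2 entries equal a_2, and so on. Then the maximum of tr(AᵀX) over X ∈ Flag(k_1,…,k_p,n) equals Σ_{i=1}^n λ_i c_i, and it is attained at X = Q · diag(a_1 I_{n_1}, a_2 I_{n_2}, …, a_{p+1} I_{n_{p+1}}) · Qᵀ. -/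
/-!
Replacing `A` by its symmetric part does not change `tr(AᵀX)` for symmetric `X`, so with
`X = R diag(c) Rᵀ` and `U = QᵀR` orthogonal the objective is `tr(Λ U diag(c) Uᵀ) = λ ⬝ (U ⊙ U) c`.
The entrywise square `U ⊙ U` of an orthogonal matrix is doubly stochastic, hence by Birkhoff's
theorem a convex combination of permutation matrices; on each of them the objective is
`∑ λᵢ c_{σ i} ≤ ∑ λᵢ cᵢ` by the rearrangement inequality, since both `λ` and `c` are decreasing.
Equality holds at `U = 1`, i.e. `R = Q`.
-/

open Matrix

theorem exists_mem_block {m : ℕ} (k : Fin (m + 1) → ℕ) {i : ℕ} (h0 : k 0 ≤ i)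
    (hlast : i < k (Fin.last m)) : ∃ j : Fin m, k j.castSucc ≤ i ∧ i < k j.succ := by
  by_contra! h
  have hle : ∀ j : Fin (m + 1), k j ≤ i := fun j => Fin.induction h0 (fun j hj => h j hj) j
  exact (hle _).not_gt hlast

theorem antitone_of_eq_on_blocks {β : Type*} [Preorder β] {m n : ℕ} {k : Fin (m + 1) → ℕ}
    (hk : Monotone k) {a : Fin m → β} (ha : Antitone a) {c : Fin n → β}
    (hcover : ∀ i : Fin n, ∃ j : Fin m, k j.castSucc ≤ i ∧ i < k j.succ)
    (hc : ∀ j (i : Fin n), k j.castSucc ≤ i → (i : ℕ) < k j.succ → c i = a j) :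
    Antitone c := by
  intro i i' hii'
  obtain ⟨j, hj, hij⟩ := hcover i
  obtain ⟨j', hj', hij'⟩ := hcover i'
  rw [hc j i hj hij, hc j' i' hj' hij']
  refine ha (not_lt.1 fun hlt => ?_)
  have := hk (Fin.succ_le_castSucc_iff.2 hlt)
  have : (i : ℕ) ≤ i' := hii'
  omega

section DoublyStochastic

variable {ι : Type*} [Fintype ι] [DecidableEq ι]

theorem Monovary.dotProduct_mulVec_le_of_mem_doublyStochastic {f g : ι → ℝ}
    (hfg : Monovary f g) {M : Matrix ι ι ℝ} (hM : M ∈ doublyStochastic ℝ ι) :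
    f ⬝ᵥ (M *ᵥ g) ≤ f ⬝ᵥ g := by
  have hlin : IsLinearMap ℝ fun N : Matrix ι ι ℝ => f ⬝ᵥ (N *ᵥ g) :=
    ⟨fun N N' => by simp only [add_mulVec, dotProduct_add],
      fun r N => by simp only [smul_mulVec, dotProduct_smul]⟩
  refine convexHull_min ?_ (convex_halfSpace_le hlin _)
    ((doublyStochastic_eq_convexHull_permMatrix (R := ℝ) (n := ι)).subset hM)
  rintro _ ⟨σ, rfl⟩
  simpa [permMatrix_mulVec, dotProduct] using hfg.sum_mul_comp_perm_le_sum_mul (σ := σ)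

theorem hadamard_self_mem_doublyStochastic {U : Matrix ι ι ℝ} (hU : Uᵀ * U = 1) :
    U ⊙ U ∈ doublyStochastic ℝ ι := by
  have hU' : U * Uᵀ = 1 := mul_eq_one_comm.1 hU
  refine mem_doublyStochastic_iff_sum.2 ⟨fun i j => mul_self_nonneg _, fun i => ?_, fun j => ?_⟩
  · simpa [mul_apply] using congrFun (congrFun hU' i) i
  · simpa [mul_apply] using congrFun (congrFun hU j) j

theorem trace_diagonal_mul_mul_diagonal_mul_transpose (d e : ι → ℝ) (U : Matrix ι ι ℝ) :
    (diagonal d * U * diagonal e * Uᵀ).trace = d ⬝ᵥ ((U ⊙ U) *ᵥ e) := by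
  simp only [trace, diag_apply, mul_apply, diagonal_apply, ite_mul, zero_mul, Finset.sum_ite_eq,
    Finset.mem_univ, ↓reduceIte, mul_ite, mul_zero, Finset.sum_ite_eq', transpose_apply,
    dotProduct, mulVec, hadamard_apply, Finset.mul_sum]
  refine Finset.sum_congr rfl fun i _ => Finset.sum_congr rfl fun j _ => ?_
  ring

theorem trace_diagonal_mul_mul_diagonal_mul_transpose_le {d e : ι → ℝ} (hde : Monovary d e)
    {U : Matrix ι ι ℝ} (hU : Uᵀ * U = 1) :
    (diagonal d * U * diagonal e * Uᵀ).trace ≤ d ⬝ᵥ e := by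
  rw [trace_diagonal_mul_mul_diagonal_mul_transpose]
  exact hde.dotProduct_mulVec_le_of_mem_doublyStochastic (hadamard_self_mem_doublyStochastic hU)

end DoublyStochastic

section Trace

variable {ι : Type*} [Fintype ι]

theorem trace_transpose_mul_of_isSymm (A : Matrix ι ι ℝ) {X : Matrix ι ι ℝ} (hX : X.IsSymm) :
    (Aᵀ * X).trace = ((1 / 2 : ℝ) • (A + Aᵀ) * X).trace := by
  have hAX : (A * X).trace = (Aᵀ * X).trace := by
    rw [← trace_transpose, transpose_mul, hX.eq, trace_mul_comm]
  rw [smul_mul, trace_smul, add_mul, trace_add, hAX, smul_eq_mul]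
  ring

theorem trace_conj_mul_conj {α : Type*} [CommSemiring α] (M N Q R : Matrix ι ι α) :
    (Q * M * Qᵀ * (R * N * Rᵀ)).trace = (M * (Qᵀ * R) * N * (Qᵀ * R)ᵀ).trace := by
  simp only [transpose_mul, transpose_transpose, Matrix.mul_assoc]
  rw [trace_mul_comm Q]
  simp only [Matrix.mul_assoc]

end Trace

/-- Unconstrained LP over a flag manifold has a closed-form solution: with
`(A + Aᵀ)/2 = Q Λ Qᵀ` an eigenvalue decomposition with eigenvalues in decreasing order
and `c` the step vector of the flag parameters (in decreasing order), the maximum of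
`tr(AᵀX)` over `X ∈ Flag(k₁,…,k_p,n)` equals `∑ λᵢ cᵢ` and is attained at
`X = Q diag(c) Qᵀ`. -/
theorem stmt15 (p n : ℕ)
    (k : Fin (p + 2) → ℕ) (hk0 : k 0 = 0) (hkn : k (Fin.last (p + 1)) = n)
    (hkmono : StrictMono k)
    (a : Fin (p + 1) → ℝ) (ha : StrictAnti a)
    (c : Fin n → ℝ)
    (hc : ∀ (j : Fin (p + 1)) (i : Fin n),
      k j.castSucc ≤ (i : ℕ) → (i : ℕ) < k j.succ → c i = a j)
    (A : Matrix (Fin n) (Fin n) ℝ)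
    (Q : Matrix (Fin n) (Fin n) ℝ) (hQ : Qᵀ * Q = 1)
    (lam : Fin n → ℝ) (hlam : Antitone lam)
    (hdecomp : (1 / 2 : ℝ) • (A + Aᵀ) = Q * Matrix.diagonal lam * Qᵀ) :
    IsGreatest {y : ℝ | ∃ X : Matrix (Fin n) (Fin n) ℝ,
        (∃ R : Matrix (Fin n) (Fin n) ℝ, Rᵀ * R = 1 ∧
          X = R * Matrix.diagonal c * Rᵀ) ∧
        y = (Aᵀ * X).trace}
      (∑ i : Fin n, lam i * c i) ∧
    (Aᵀ * (Q * Matrix.diagonal c * Qᵀ)).trace = ∑ i : Fin n, lam i * c i := by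
  have hc_anti : Antitone c := antitone_of_eq_on_blocks hkmono.monotone ha.antitone
    (fun i => exists_mem_block k (by omega) (by omega)) hc
  have htrace (R : Matrix (Fin n) (Fin n) ℝ) : (Aᵀ * (R * diagonal c * Rᵀ)).trace =
      (diagonal lam * (Qᵀ * R) * diagonal c * (Qᵀ * R)ᵀ).trace := by
    have hX : (R * diagonal c * Rᵀ).IsSymm := by
      simp only [IsSymm, transpose_mul, transpose_transpose, diagonal_transpose, Matrix.mul_assoc]
    rw [trace_transpose_mul_of_isSymm A hX, hdecomp, trace_conj_mul_conj]
  have hattained : (Aᵀ * (Q * diagonal c * Qᵀ)).trace = ∑ i, lam i * c i := by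
    rw [htrace, hQ, Matrix.mul_one, transpose_one, Matrix.mul_one, diagonal_mul_diagonal,
      trace_diagonal]
  refine ⟨⟨⟨_, ⟨Q, hQ, rfl⟩, hattained.symm⟩, ?_⟩, hattained⟩
  rintro _ ⟨_, ⟨R, hR, rfl⟩, rfl⟩
  have hQR : (Qᵀ * R)ᵀ * (Qᵀ * R) = 1 := by
    rw [transpose_mul, transpose_transpose, Matrix.mul_assoc, ← Matrix.mul_assoc Q,
      mul_eq_one_comm.1 hQ, Matrix.one_mul, hR]
  rw [htrace]
  exact trace_diagonal_mul_mul_diagonal_mul_transpose_le (hlam.monovary hc_anti) hQR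
end
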